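/- arXiv:2109.09816 — 3 statements merged into one kernel-verified Lean document; each statement's English description precedes it below -/
import Mathlib

section
/- Lower bound on regret per round under the straightforward policy: there exists a universal constant C_reg > 0 such that in the per-round straightforward-policy model, for all θ, l, u with -1 ≤ l ≤ θ ≤ u ≤ 1, the expected per-round regret satisfies E[reg] ≥ C_reg · (θ - m)², where the expectation is taken over the independent standard normal variables x and z. -/
open MeasureTheory ProbabilityTheory Set

noncomputable section

/-- Standard normal density. -/
def stdPdf (z : ℝ) : ℝ := Real.exp (-z ^ 2 / 2) / Real.sqrt (2 * Real.pi)

/-- Standard normal cdf. -/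
def stdCdf (c : ℝ) : ℝ := ∫ z in Set.Iio c, stdPdf z

/-- Mean of a standard normal truncated to `(c, ∞)`. -/
def truncMeanAbove (c : ℝ) : ℝ :=
  (∫ z in Set.Ioi c, z * stdPdf z) / (∫ z in Set.Ioi c, stdPdf z)

/-- Mean of a standard normal truncated to `(-∞, c)`. -/
def truncMeanBelow (c : ℝ) : ℝ :=
  (∫ z in Set.Iio c, z * stdPdf z) / (∫ z in Set.Iio c, stdPdf z)

/-- Mean of a standard normal truncated to `(a, b)`. -/
def truncMeanBetween (a b : ℝ) : ℝ :=
  (∫ z in Set.Ioo a b, z * stdPdf z) / (∫ z in Set.Ioo a b, stdPdf z)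

/-- Signum, with the (measure-zero) value at `0` set to `-1`. -/
def sgn (x : ℝ) : ℝ := if 0 < x then 1 else -1

/-- The standard normal measure on `ℝ`. -/
def stdNormal : Measure ℝ := gaussianReal 0 1

/-- The joint law of two independent standard normals. -/
def stdNormal2 : Measure (ℝ × ℝ) := stdNormal.prod stdNormal

/-- Uniform measure on `[-1, 1]` (the prior on the state θ). -/
def uniformState : Measure ℝ := (2 : ENNReal)⁻¹ • volume.restrict (Set.Icc (-1 : ℝ) 1)

instance : IsProbabilityMeasure stdNormal := by unfold stdNormal; infer_instance
instance : IsProbabilityMeasure stdNormal2 := by unfold stdNormal2; infer_instance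
/-- Recommender's message under the straightforward policy. -/
def aSt (m x z : ℝ) : ℝ := if 0 < x * m + z then 1 else -1

/-- User's posterior mean of the dynamic payoff under the straightforward policy. -/
def ZSt (m x z : ℝ) : ℝ :=
  if 0 < x * m + z then truncMeanAbove (-(x * m)) else truncMeanBelow (-(x * m))

/-- User's action under the straightforward policy. -/
def bSt (θ m x z : ℝ) : ℝ := if 0 < x * θ + ZSt m x z then 1 else -1

/-- The superior arm. -/
def bStar (θ x z : ℝ) : ℝ := if 0 < x * θ + z then 1 else -1

/-- Per-round regret under the straightforward policy. -/
def regSt (θ m x z : ℝ) : ℝ := if bSt θ m x z = bStar θ x z then 0 else |x * θ + z|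

/-- One-step update of the confidence interval under the straightforward policy. -/
def updSt (θ l u x z : ℝ) : ℝ × ℝ :=
  if bSt θ ((l + u) / 2) x z * sgn x < 0 then
    (l, min u (-(ZSt ((l + u) / 2) x z / x)))
  else
    (max l (-(ZSt ((l + u) / 2) x z / x)), u)


/-! ### Auxiliary lemmas -/

lemma continuous_stdPdf : Continuous stdPdf := by
  unfold stdPdf
  fun_prop

lemma stdPdf_nonneg (z : ℝ) : 0 ≤ stdPdf z := by
  unfold stdPdf
  positivity

lemma stdPdf_pos (z : ℝ) : 0 < stdPdf z := by
  have h3 : 0 < Real.sqrt (2 * Real.pi) := Real.sqrt_pos.2 (by positivity)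
  unfold stdPdf
  positivity

lemma stdPdf_ge_of_abs_le {z : ℝ} (hz : |z| ≤ 8) : stdPdf 8 ≤ stdPdf z := by
  have h1 : z ^ 2 ≤ (8 : ℝ) ^ 2 := by
    have h0 := abs_nonneg z
    calc z ^ 2 = |z| ^ 2 := (sq_abs z).symm
    _ ≤ (8 : ℝ) ^ 2 := by nlinarith
  have h3 : 0 < Real.sqrt (2 * Real.pi) := Real.sqrt_pos.2 (by positivity)
  unfold stdPdf
  gcongr

lemma integrable_stdPdf : Integrable stdPdf := by
  have h : Integrable (fun z : ℝ => Real.exp (-(1/2 : ℝ) * z ^ 2) / Real.sqrt (2 * Real.pi)) :=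
    (integrable_exp_neg_mul_sq (by norm_num : (0:ℝ) < 1/2)).div_const _
  have e : stdPdf = fun z : ℝ => Real.exp (-(1/2 : ℝ) * z ^ 2) / Real.sqrt (2 * Real.pi) := by
    funext z; unfold stdPdf; rw [show -z ^ 2 / 2 = -(1/2 : ℝ) * z ^ 2 by ring]
  rw [e]; exact h

lemma integrable_mul_stdPdf : Integrable (fun z : ℝ => z * stdPdf z) := by
  have h : Integrable (fun z : ℝ => z * Real.exp (-(1/2 : ℝ) * z ^ 2) / Real.sqrt (2 * Real.pi)) :=
    (integrable_mul_exp_neg_mul_sq (by norm_num : (0:ℝ) < 1/2)).div_const _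
  have e : (fun z : ℝ => z * stdPdf z)
      = fun z : ℝ => z * Real.exp (-(1/2 : ℝ) * z ^ 2) / Real.sqrt (2 * Real.pi) := by
    funext z; unfold stdPdf; rw [show -z ^ 2 / 2 = -(1/2 : ℝ) * z ^ 2 by ring]; ring
  rw [e]; exact h

lemma abs_max_self_zero_le (z : ℝ) : |max z 0| ≤ |z| := by
  rw [abs_of_nonneg (le_max_right z 0)]
  exact max_le (le_abs_self z) (abs_nonneg z)

lemma integrable_maxmul : Integrable (fun z : ℝ => max z 0 * stdPdf z) := by
  refine integrable_mul_stdPdf.mono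
    (((continuous_id.max continuous_const).mul continuous_stdPdf).aestronglyMeasurable)
    (ae_of_all _ fun z => ?_)
  rw [Real.norm_eq_abs, Real.norm_eq_abs, abs_mul, abs_mul]
  exact mul_le_mul_of_nonneg_right (abs_max_self_zero_le z) (abs_nonneg _)

lemma integrable_maxmul_neg : Integrable (fun z : ℝ => max (-z) 0 * stdPdf z) := by
  refine integrable_mul_stdPdf.mono
    (((continuous_neg.max continuous_const).mul continuous_stdPdf).aestronglyMeasurable)
    (ae_of_all _ fun z => ?_)
  rw [Real.norm_eq_abs, Real.norm_eq_abs, abs_mul, abs_mul]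
  refine mul_le_mul_of_nonneg_right ?_ (abs_nonneg _)
  calc |max (-z) 0| ≤ |(-z)| := abs_max_self_zero_le (-z)
  _ = |z| := abs_neg z

lemma measurable_truncMeanAbove : Measurable truncMeanAbove := by
  have hD : Antitone (fun c : ℝ => ∫ z in Set.Ioi c, stdPdf z) := by
    intro a b hab
    exact setIntegral_mono_set integrable_stdPdf.integrableOn
      (ae_of_all _ fun z => stdPdf_nonneg z)
      (HasSubset.Subset.eventuallyLE (Set.Ioi_subset_Ioi hab))
  have hNpos : Antitone (fun c : ℝ => ∫ z in Set.Ioi c, max z 0 * stdPdf z) := by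
    intro a b hab
    exact setIntegral_mono_set integrable_maxmul.integrableOn
      (ae_of_all _ fun z => mul_nonneg (le_max_right z 0) (stdPdf_nonneg z))
      (HasSubset.Subset.eventuallyLE (Set.Ioi_subset_Ioi hab))
  have hNneg : Antitone (fun c : ℝ => ∫ z in Set.Ioi c, max (-z) 0 * stdPdf z) := by
    intro a b hab
    exact setIntegral_mono_set integrable_maxmul_neg.integrableOn
      (ae_of_all _ fun z => mul_nonneg (le_max_right (-z) 0) (stdPdf_nonneg z))
      (HasSubset.Subset.eventuallyLE (Set.Ioi_subset_Ioi hab))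
  have hNeq : (fun c : ℝ => ∫ z in Set.Ioi c, z * stdPdf z) =
      fun c => (∫ z in Set.Ioi c, max z 0 * stdPdf z)
        - ∫ z in Set.Ioi c, max (-z) 0 * stdPdf z := by
    funext c
    rw [← integral_sub integrable_maxmul.integrableOn integrable_maxmul_neg.integrableOn]
    refine setIntegral_congr_fun measurableSet_Ioi fun z _ => ?_
    rw [← sub_mul, max_zero_sub_max_neg_zero_eq_self]
  have hN : Measurable (fun c : ℝ => ∫ z in Set.Ioi c, z * stdPdf z) := by
    rw [hNeq]; exact hNpos.measurable.sub hNneg.measurable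
  unfold truncMeanAbove
  exact hN.div hD.measurable

lemma measurable_truncMeanBelow : Measurable truncMeanBelow := by
  have hD : Monotone (fun c : ℝ => ∫ z in Set.Iio c, stdPdf z) := by
    intro a b hab
    exact setIntegral_mono_set integrable_stdPdf.integrableOn
      (ae_of_all _ fun z => stdPdf_nonneg z)
      (HasSubset.Subset.eventuallyLE (Set.Iio_subset_Iio hab))
  have hNpos : Monotone (fun c : ℝ => ∫ z in Set.Iio c, max z 0 * stdPdf z) := by
    intro a b hab
    exact setIntegral_mono_set integrable_maxmul.integrableOn
      (ae_of_all _ fun z => mul_nonneg (le_max_right z 0) (stdPdf_nonneg z))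
      (HasSubset.Subset.eventuallyLE (Set.Iio_subset_Iio hab))
  have hNneg : Monotone (fun c : ℝ => ∫ z in Set.Iio c, max (-z) 0 * stdPdf z) := by
    intro a b hab
    exact setIntegral_mono_set integrable_maxmul_neg.integrableOn
      (ae_of_all _ fun z => mul_nonneg (le_max_right (-z) 0) (stdPdf_nonneg z))
      (HasSubset.Subset.eventuallyLE (Set.Iio_subset_Iio hab))
  have hNeq : (fun c : ℝ => ∫ z in Set.Iio c, z * stdPdf z) =
      fun c => (∫ z in Set.Iio c, max z 0 * stdPdf z)
        - ∫ z in Set.Iio c, max (-z) 0 * stdPdf z := by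
    funext c
    rw [← integral_sub integrable_maxmul.integrableOn integrable_maxmul_neg.integrableOn]
    refine setIntegral_congr_fun measurableSet_Iio fun z _ => ?_
    rw [← sub_mul, max_zero_sub_max_neg_zero_eq_self]
  have hN : Measurable (fun c : ℝ => ∫ z in Set.Iio c, z * stdPdf z) := by
    rw [hNeq]; exact hNpos.measurable.sub hNneg.measurable
  unfold truncMeanBelow
  exact hN.div hD.measurable

lemma measurable_ZSt (m : ℝ) : Measurable (fun p : ℝ × ℝ => ZSt m p.1 p.2) := by
  unfold ZSt
  refine Measurable.ite ?_ ?_ ?_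
  · exact measurableSet_lt measurable_const (by fun_prop)
  · exact measurable_truncMeanAbove.comp (by fun_prop)
  · exact measurable_truncMeanBelow.comp (by fun_prop)

lemma measurable_regSt (θ m : ℝ) : Measurable (fun p : ℝ × ℝ => regSt θ m p.1 p.2) := by
  have hb : Measurable (fun p : ℝ × ℝ => bSt θ m p.1 p.2) := by
    unfold bSt
    refine Measurable.ite ?_ measurable_const measurable_const
    exact measurableSet_lt measurable_const
      ((measurable_fst.mul_const θ).add (measurable_ZSt m))
  have hbs : Measurable (fun p : ℝ × ℝ => bStar θ p.1 p.2) := by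
    unfold bStar
    exact Measurable.ite (measurableSet_lt measurable_const (by fun_prop))
      measurable_const measurable_const
  unfold regSt
  refine Measurable.ite (measurableSet_eq_fun hb hbs) measurable_const ?_
  exact ((measurable_fst.mul_const θ).add measurable_snd).abs

lemma regSt_nonneg (θ m x z : ℝ) : 0 ≤ regSt θ m x z := by
  unfold regSt; split
  exacts [le_rfl, abs_nonneg _]

lemma regSt_le (θ m x z : ℝ) : regSt θ m x z ≤ |x * θ + z| := by
  unfold regSt; split
  exacts [abs_nonneg _, le_rfl]

lemma stdPdf_eq_gaussianPDFReal (z : ℝ) : gaussianPDFReal 0 1 z = stdPdf z := by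
  simp only [gaussianPDFReal, stdPdf, NNReal.coe_one, mul_one, sub_zero]
  ring

lemma stdNormal_eq_withDensity :
    stdNormal = volume.withDensity (fun z => ((stdPdf z).toNNReal : ENNReal)) := by
  rw [stdNormal, gaussianReal_of_var_ne_zero 0 one_ne_zero]
  congr 1
  funext z
  rw [gaussianPDF, stdPdf_eq_gaussianPDFReal]
  rfl

lemma measurable_stdPdf_toNNReal : Measurable (fun z : ℝ => (stdPdf z).toNNReal) :=
  continuous_stdPdf.measurable.real_toNNReal

lemma setIntegral_stdNormal (f : ℝ → ℝ) {s : Set ℝ} (hs : MeasurableSet s) :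
    ∫ z in s, f z ∂stdNormal = ∫ z in s, stdPdf z * f z := by
  rw [stdNormal_eq_withDensity,
    setIntegral_withDensity_eq_setIntegral_smul measurable_stdPdf_toNNReal f hs]
  refine setIntegral_congr_fun hs fun z _ => ?_
  simp [NNReal.smul_def, Real.coe_toNNReal _ (stdPdf_nonneg z)]

lemma integrable_id_stdNormal : Integrable (fun z : ℝ => z) stdNormal := by
  rw [stdNormal_eq_withDensity,
    integrable_withDensity_iff (measurable_stdPdf_toNNReal.coe_nnreal_ennreal)
      (ae_of_all _ fun z => ENNReal.coe_lt_top)]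
  simpa [Real.coe_toNNReal _ (stdPdf_nonneg _)] using integrable_mul_stdPdf

lemma integrable_regSt_z (θ m x : ℝ) : Integrable (fun z => regSt θ m x z) stdNormal := by
  have hmeas : Measurable fun z : ℝ => regSt θ m x z :=
    (measurable_regSt θ m).comp (measurable_const.prodMk measurable_id)
  have hg : Integrable (fun z : ℝ => |x * θ + z|) stdNormal :=
    ((integrable_const (x * θ)).add integrable_id_stdNormal).abs
  refine hg.mono hmeas.aestronglyMeasurable (ae_of_all _ fun z => ?_)
  rw [Real.norm_eq_abs, Real.norm_eq_abs, abs_abs,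
    abs_of_nonneg (regSt_nonneg θ m x z)]
  exact regSt_le θ m x z

lemma integrable_regSt (θ m : ℝ) :
    Integrable (fun p : ℝ × ℝ => regSt θ m p.1 p.2) stdNormal2 := by
  have hmp1 : MeasurePreserving (Prod.fst : ℝ × ℝ → ℝ) stdNormal2 stdNormal :=
    ⟨measurable_fst, by rw [stdNormal2, Measure.map_fst_prod]; simp⟩
  have hmp2 : MeasurePreserving (Prod.snd : ℝ × ℝ → ℝ) stdNormal2 stdNormal :=
    ⟨measurable_snd, by rw [stdNormal2, Measure.map_snd_prod]; simp⟩
  have h1 : Integrable (fun p : ℝ × ℝ => p.1) stdNormal2 :=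
    (hmp1.integrable_comp integrable_id_stdNormal.aestronglyMeasurable).2 integrable_id_stdNormal
  have h2 : Integrable (fun p : ℝ × ℝ => p.2) stdNormal2 :=
    (hmp2.integrable_comp integrable_id_stdNormal.aestronglyMeasurable).2 integrable_id_stdNormal
  have hg : Integrable (fun p : ℝ × ℝ => |p.1 * θ + p.2|) stdNormal2 :=
    ((h1.mul_const θ).add h2).abs
  refine hg.mono (measurable_regSt θ m).aestronglyMeasurable (ae_of_all _ fun p => ?_)
  rw [Real.norm_eq_abs, Real.norm_eq_abs, abs_abs,
    abs_of_nonneg (regSt_nonneg θ m p.1 p.2)]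
  exact regSt_le θ m p.1 p.2

lemma integrable_stdPdf_mul_abs : Integrable (fun z : ℝ => stdPdf z * |z|) := by
  have h := integrable_mul_stdPdf.abs
  refine h.congr (ae_of_all _ fun z => ?_)
  show |z * stdPdf z| = stdPdf z * |z|
  rw [abs_mul, abs_of_nonneg (stdPdf_nonneg z), mul_comm]

lemma region_bound (θ m x lo len K : ℝ) (hlen : 0 ≤ len) (hK : 0 ≤ K)
    (habs : ∀ z ∈ Set.Ioc lo (lo + len), |z| ≤ 8)
    (hreg : ∀ z ∈ Set.Ioc lo (lo + len), K ≤ regSt θ m x z) :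
    stdPdf 8 * (len * K) ≤ ∫ z, regSt θ m x z ∂stdNormal := by
  have hmeasz : Measurable fun z : ℝ => regSt θ m x z :=
    (measurable_regSt θ m).comp (measurable_const.prodMk measurable_id)
  have h0 : ∫ z in Set.Ioc lo (lo + len), regSt θ m x z ∂stdNormal
      ≤ ∫ z, regSt θ m x z ∂stdNormal :=
    setIntegral_le_integral (integrable_regSt_z θ m x)
      (ae_of_all _ fun z => regSt_nonneg θ m x z)
  have h1 : ∫ z in Set.Ioc lo (lo + len), regSt θ m x z ∂stdNormal
      = ∫ z in Set.Ioc lo (lo + len), stdPdf z * regSt θ m x z :=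
    setIntegral_stdNormal _ measurableSet_Ioc
  have hglob : Integrable (fun z : ℝ => stdPdf z * regSt θ m x z) := by
    have hbd : Integrable (fun z : ℝ => stdPdf z * |x * θ| + stdPdf z * |z|) :=
      (integrable_stdPdf.mul_const _).add integrable_stdPdf_mul_abs
    refine hbd.mono ((continuous_stdPdf.measurable.mul hmeasz).aestronglyMeasurable)
      (ae_of_all _ fun z => ?_)
    have hr1 : regSt θ m x z ≤ |x * θ| + |z| := (regSt_le θ m x z).trans (abs_add_le _ _)
    have hr0 := regSt_nonneg θ m x z
    have hp := stdPdf_nonneg z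
    rw [Real.norm_eq_abs, Real.norm_eq_abs, abs_of_nonneg (mul_nonneg hp hr0),
      abs_of_nonneg (by positivity)]
    nlinarith [mul_le_mul_of_nonneg_left hr1 hp]
  have h2 : ∫ z in Set.Ioc lo (lo + len), (stdPdf 8 * K)
      ≤ ∫ z in Set.Ioc lo (lo + len), stdPdf z * regSt θ m x z := by
    refine setIntegral_mono_on ?_ hglob.integrableOn measurableSet_Ioc fun z hz => ?_
    · exact integrableOn_const (by rw [Real.volume_Ioc]; exact ENNReal.ofReal_ne_top)
    · exact mul_le_mul (stdPdf_ge_of_abs_le (habs z hz)) (hreg z hz) hK (stdPdf_nonneg z)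
  have h3 : ∫ z in Set.Ioc lo (lo + len), (stdPdf 8 * K : ℝ) = len * (stdPdf 8 * K) := by
    rw [setIntegral_const, measureReal_def, Real.volume_Ioc]
    simp [ENNReal.toReal_ofReal hlen]
  calc stdPdf 8 * (len * K) = len * (stdPdf 8 * K) := by ring
  _ = ∫ z in Set.Ioc lo (lo + len), (stdPdf 8 * K : ℝ) := h3.symm
  _ ≤ ∫ z in Set.Ioc lo (lo + len), stdPdf z * regSt θ m x z := h2
  _ = ∫ z in Set.Ioc lo (lo + len), regSt θ m x z ∂stdNormal := h1.symm
  _ ≤ ∫ z, regSt θ m x z ∂stdNormal := h0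

lemma inner_bound (θ m x : ℝ) (hc : |x * m| ≤ 2) (he0 : 0 < x * m - x * θ)
    (he4 : x * m - x * θ ≤ 4) :
    stdPdf 8 * ((x * m - x * θ) ^ 2 / 16) ≤ ∫ z, regSt θ m x z ∂stdNormal := by
  obtain ⟨hcl, hcu⟩ := abs_le.1 hc
  set e := x * m - x * θ with he
  by_cases h : 0 < x * θ + truncMeanAbove (-(x * m))
  · have habs : ∀ z ∈ Set.Ioc (-(x * m)) (-(x * m) + e / 2), |z| ≤ 8 := by
      intro z hz
      obtain ⟨hz1, hz2⟩ := hz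
      rw [abs_le]; constructor <;> linarith
    have hreg : ∀ z ∈ Set.Ioc (-(x * m)) (-(x * m) + e / 2), e / 2 ≤ regSt θ m x z := by
      intro z hz
      obtain ⟨hz1, hz2⟩ := hz
      have ha : 0 < x * m + z := by linarith
      have hz' : ZSt m x z = truncMeanAbove (-(x * m)) := by unfold ZSt; rw [if_pos ha]
      have hbS : bSt θ m x z = 1 := by unfold bSt; rw [hz', if_pos h]
      have hstar : bStar θ x z = -1 := by
        unfold bStar; rw [if_neg]; push_neg; linarith
      have hne : bSt θ m x z ≠ bStar θ x z := by rw [hbS, hstar]; norm_num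
      unfold regSt; rw [if_neg hne, abs_of_nonpos (by linarith)]
      linarith
    have hb := region_bound θ m x (-(x * m)) (e / 2) (e / 2) (by linarith) (by linarith)
      habs hreg
    exact le_trans (mul_le_mul_of_nonneg_left (by nlinarith) (stdPdf_nonneg 8)) hb
  · have habs : ∀ z ∈ Set.Ioc (-(x * m) + e + 1) (-(x * m) + e + 1 + 1), |z| ≤ 8 := by
      intro z hz
      obtain ⟨hz1, hz2⟩ := hz
      rw [abs_le]; constructor <;> linarith
    have hreg : ∀ z ∈ Set.Ioc (-(x * m) + e + 1) (-(x * m) + e + 1 + 1),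
        (1 : ℝ) ≤ regSt θ m x z := by
      intro z hz
      obtain ⟨hz1, hz2⟩ := hz
      have ha : 0 < x * m + z := by linarith
      have hz' : ZSt m x z = truncMeanAbove (-(x * m)) := by unfold ZSt; rw [if_pos ha]
      have hbS : bSt θ m x z = -1 := by unfold bSt; rw [hz', if_neg h]
      have hstar : bStar θ x z = 1 := by
        unfold bStar; rw [if_pos]; linarith
      have hne : bSt θ m x z ≠ bStar θ x z := by rw [hbS, hstar]; norm_num
      unfold regSt; rw [if_neg hne]
      exact le_trans (by linarith) (le_abs_self _)
    have hb := region_bound θ m x (-(x * m) + e + 1) 1 1 zero_le_one zero_le_one habs hreg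
    exact le_trans (mul_le_mul_of_nonneg_left (by nlinarith) (stdPdf_nonneg 8)) hb

/-- **Lower bound on regret per round under the straightforward policy.**
There is a universal constant `C_reg > 0` such that for all `θ, l, u` with
`-1 ≤ l ≤ θ ≤ u ≤ 1`, the expected per-round regret (over independent standard
normal `x` and `z`) is at least `C_reg * (θ - m)²`, where `m = (l + u)/2`. -/
theorem straightforward_per_round_regret_lower_bound :
    ∃ Creg : ℝ, 0 < Creg ∧
      ∀ θ l u : ℝ, -1 ≤ l → l ≤ θ → θ ≤ u → u ≤ 1 →
        Creg * (θ - (l + u) / 2) ^ 2 ≤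
          ∫ p : ℝ × ℝ, regSt θ ((l + u) / 2) p.1 p.2 ∂stdNormal2 := by
  refine ⟨stdPdf 8 * stdPdf 8 / 16,
    div_pos (mul_pos (stdPdf_pos 8) (stdPdf_pos 8)) (by norm_num), ?_⟩
  intro θ l u h1 h2 h3 h4
  set m := (l + u) / 2 with hm
  have hm1 : |m| ≤ 1 := by rw [abs_le]; constructor <;> (rw [hm]; linarith)
  have hd1 : |θ - m| ≤ 1 := by rw [abs_le]; constructor <;> (rw [hm]; linarith)
  rcases eq_or_ne θ m with heq | hne
  · rw [heq, sub_self]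
    simpa using integral_nonneg (μ := stdNormal2) fun p : ℝ × ℝ => regSt_nonneg m m p.1 p.2
  · obtain ⟨lo, hI⟩ : ∃ lo : ℝ, ∀ x ∈ Set.Ioc lo (lo + 1), |x| ≤ 2 ∧ |θ - m| ≤ x * m - x * θ := by
      rcases lt_or_gt_of_ne hne with hlt | hgt
      · refine ⟨1, fun x hx => ?_⟩
        obtain ⟨ha, hb⟩ := hx
        norm_num at hb
        refine ⟨by rw [abs_le]; constructor <;> linarith, ?_⟩
        rw [abs_of_nonpos (by linarith : θ - m ≤ 0)]
        nlinarith
      · refine ⟨-2, fun x hx => ?_⟩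
        obtain ⟨ha, hb⟩ := hx
        norm_num at hb
        refine ⟨by rw [abs_le]; constructor <;> linarith, ?_⟩
        rw [abs_of_nonneg (by linarith : 0 ≤ θ - m)]
        nlinarith
    set I := Set.Ioc lo (lo + 1) with hIdef
    have hd0 : 0 < |θ - m| := abs_pos.2 (sub_ne_zero.2 hne)
    have hinner : ∀ x ∈ I, stdPdf 8 * ((θ - m) ^ 2 / 16) ≤ ∫ z, regSt θ m x z ∂stdNormal := by
      intro x hx
      obtain ⟨hx2, hxe⟩ := hI x hx
      have he0 : 0 < x * m - x * θ := lt_of_lt_of_le hd0 hxe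
      have he4 : x * m - x * θ ≤ 4 := by
        calc x * m - x * θ ≤ |x * (m - θ)| := by
              rw [show x * m - x * θ = x * (m - θ) by ring]; exact le_abs_self _
        _ = |x| * |m - θ| := abs_mul _ _
        _ ≤ 2 * 1 := mul_le_mul hx2 (by rwa [abs_sub_comm]) (abs_nonneg _) (by norm_num)
        _ ≤ 4 := by norm_num
      have hcm : |x * m| ≤ 2 := by
        rw [abs_mul]
        calc |x| * |m| ≤ 2 * 1 := mul_le_mul hx2 hm1 (abs_nonneg _) (by norm_num)
        _ = 2 := by norm_num
      refine le_trans ?_ (inner_bound θ m x hcm he0 he4)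
      refine mul_le_mul_of_nonneg_left ?_ (stdPdf_nonneg 8)
      have hsq : (θ - m) ^ 2 ≤ (x * m - x * θ) ^ 2 := by
        nlinarith [sq_abs (θ - m), abs_nonneg (θ - m)]
      linarith
    have hint : Integrable (fun p : ℝ × ℝ => regSt θ m p.1 p.2) stdNormal2 :=
      integrable_regSt θ m
    have hprodeq : (stdNormal.restrict I).prod stdNormal
        = stdNormal2.restrict (I ×ˢ (Set.univ : Set ℝ)) := by
      rw [stdNormal2, ← Measure.prod_restrict, Measure.restrict_univ]
    have hres : Integrable (fun p : ℝ × ℝ => regSt θ m p.1 p.2)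
        ((stdNormal.restrict I).prod stdNormal) := by
      rw [hprodeq]; exact hint.integrableOn
    have step1 : ∫ p in I ×ˢ (Set.univ : Set ℝ), regSt θ m p.1 p.2 ∂stdNormal2
        ≤ ∫ p : ℝ × ℝ, regSt θ m p.1 p.2 ∂stdNormal2 :=
      setIntegral_le_integral hint (ae_of_all _ fun p => regSt_nonneg θ m p.1 p.2)
    have step2 : ∫ p in I ×ˢ (Set.univ : Set ℝ), regSt θ m p.1 p.2 ∂stdNormal2
        = ∫ x in I, ∫ z, regSt θ m x z ∂stdNormal ∂stdNormal := by
      rw [← hprodeq]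
      exact integral_prod _ hres
    have hgint : IntegrableOn (fun x => ∫ z, regSt θ m x z ∂stdNormal) I stdNormal :=
      hres.integral_prod_left
    have step3 : ∫ _x in I, (stdPdf 8 * ((θ - m) ^ 2 / 16)) ∂stdNormal
        ≤ ∫ x in I, (∫ z, regSt θ m x z ∂stdNormal) ∂stdNormal :=
      setIntegral_mono_on (integrableOn_const (measure_lt_top _ _).ne) hgint
        measurableSet_Ioc hinner
    have step4 : ∫ _x in I, (stdPdf 8 * ((θ - m) ^ 2 / 16)) ∂stdNormal
        = (stdNormal I).toReal * (stdPdf 8 * ((θ - m) ^ 2 / 16)) := by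
      rw [setIntegral_const, smul_eq_mul]; rfl
    have hνI : stdPdf 8 ≤ (stdNormal I).toReal := by
      have ha : (stdNormal I).toReal = ∫ x in I, (1 : ℝ) ∂stdNormal := by
        rw [setIntegral_const, smul_eq_mul, mul_one]; rfl
      rw [ha, setIntegral_stdNormal _ measurableSet_Ioc]
      have hb : ∫ _x in I, (stdPdf 8 : ℝ) ≤ ∫ x in I, stdPdf x * 1 := by
        refine setIntegral_mono_on
          (integrableOn_const (by rw [hIdef, Real.volume_Ioc]; exact ENNReal.ofReal_ne_top))
          ((integrable_stdPdf.mul_const 1).integrableOn) measurableSet_Ioc fun x hx => ?_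
        rw [mul_one]
        exact stdPdf_ge_of_abs_le (le_trans (hI x hx).1 (by norm_num))
      have hcc : ∫ _x in I, (stdPdf 8 : ℝ) = stdPdf 8 := by
        rw [setIntegral_const, smul_eq_mul, hIdef, measureReal_def, Real.volume_Ioc]
        simp
      linarith [hb, hcc]
    calc stdPdf 8 * stdPdf 8 / 16 * (θ - m) ^ 2
        = stdPdf 8 * (stdPdf 8 * ((θ - m) ^ 2 / 16)) := by ring
    _ ≤ (stdNormal I).toReal * (stdPdf 8 * ((θ - m) ^ 2 / 16)) := by
        refine mul_le_mul_of_nonneg_right hνI ?_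
        have := sq_nonneg (θ - m)
        have := stdPdf_nonneg 8
        positivity
    _ = ∫ _x in I, (stdPdf 8 * ((θ - m) ^ 2 / 16)) ∂stdNormal := step4.symm
    _ ≤ ∫ x in I, (∫ z, regSt θ m x z ∂stdNormal) ∂stdNormal := step3
    _ = ∫ p in I ×ˢ (Set.univ : Set ℝ), regSt θ m p.1 p.2 ∂stdNormal2 := step2.symm
    _ ≤ ∫ p : ℝ × ℝ, regSt θ m p.1 p.2 ∂stdNormal2 := step1

end
end

section
/- Geometric update under the ternary policy: for every constant C_ε > 0 there exists a constant C_w > 0 depending only on C_ε such that in the per-round ternary-policy model with ε = C_ε · w, the conditional probability P[ w' ≤ (5/6)·w | a = 0 ] ≥ C_w, for all θ, l, u with -1 ≤ l ≤ θ ≤ u ≤ 1 and w = u - l > 0. -/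
open MeasureTheory ProbabilityTheory Set

noncomputable section

/-- Recommender's message under the ternary policy with tolerance `ε`. -/
def aTer (m ε x z : ℝ) : ℝ :=
  if ε < x * m + z then 1 else if |x * m + z| < ε then 0 else -1

/-- User's posterior mean of the dynamic payoff under the ternary policy. -/
def ZTer (m ε x z : ℝ) : ℝ :=
  if ε < x * m + z then truncMeanAbove (-(x * m) + ε)
  else if |x * m + z| < ε then truncMeanBetween (-(x * m) - ε) (-(x * m) + ε)
  else truncMeanBelow (-(x * m) - ε)

/-- User's action under the ternary policy. -/
def bTer (θ m ε x z : ℝ) : ℝ := if 0 < x * θ + ZTer m ε x z then 1 else -1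

/-- Per-round regret under the ternary policy. -/
def regTer (θ m ε x z : ℝ) : ℝ := if bTer θ m ε x z = bStar θ x z then 0 else |x * θ + z|

/-- One-step update of the confidence interval under the ternary policy with
tolerance `ε = Cε * (u - l)`. -/
def updTer (θ Cε l u x z : ℝ) : ℝ × ℝ :=
  if bTer θ ((l + u) / 2) (Cε * (u - l)) x z * sgn x < 0 then
    (l, min u (-(ZTer ((l + u) / 2) (Cε * (u - l)) x z / x)))
  else
    (max l (-(ZTer ((l + u) / 2) (Cε * (u - l)) x z / x)), u)

/-! ### Auxiliary lemmas -/

lemma stdPdf_eq (z : ℝ) : stdPdf z = gaussianPDFReal 0 1 z := by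
  unfold stdPdf gaussianPDFReal
  have h2 : Real.sqrt 2 ≠ 0 := by positivity
  have hp : Real.sqrt Real.pi ≠ 0 := by positivity
  norm_num
  field_simp

lemma stdPdf_le (z : ℝ) : stdPdf z ≤ (Real.sqrt (2 * Real.pi))⁻¹ := by
  unfold stdPdf
  have h1 : Real.exp (-z ^ 2 / 2) ≤ 1 := Real.exp_le_one_iff.2 (by nlinarith [sq_nonneg z])
  have h0 : (0:ℝ) < Real.sqrt (2 * Real.pi) := Real.sqrt_pos.2 (by positivity)
  rw [div_eq_mul_inv]
  nlinarith [inv_pos.2 h0]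

lemma stdPdf_ge {K z : ℝ} (h : |z| ≤ K) :
    Real.exp (-K ^ 2 / 2) / Real.sqrt (2 * Real.pi) ≤ stdPdf z := by
  unfold stdPdf
  have h2 : z ^ 2 ≤ K ^ 2 := sq_le_sq' (by linarith [neg_abs_le z]) (by linarith [le_abs_self z])
  have h0 : (0:ℝ) ≤ Real.sqrt (2 * Real.pi) := Real.sqrt_nonneg _
  gcongr

lemma integrableOn_stdPdf (a b : ℝ) : IntegrableOn stdPdf (Ioo a b) :=
  (continuous_stdPdf.integrableOn_Icc).mono_set Ioo_subset_Icc_self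

lemma integrableOn_mul_stdPdf (a b : ℝ) : IntegrableOn (fun z => z * stdPdf z) (Ioo a b) :=
  ((continuous_id.mul continuous_stdPdf).integrableOn_Icc).mono_set Ioo_subset_Icc_self

lemma denom_pos {a b : ℝ} (hab : a < b) : 0 < ∫ z in Ioo a b, stdPdf z := by
  rw [setIntegral_pos_iff_support_of_nonneg_ae
    (ae_of_all _ (fun z => (stdPdf_pos z).le)) (integrableOn_stdPdf a b)]
  have h : Function.support stdPdf ∩ Ioo a b = Ioo a b := by
    rw [inter_eq_right]
    intro z _
    exact (stdPdf_pos z).ne'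
  rw [h, Real.volume_Ioo]
  simp [hab, sub_pos.2 hab]

lemma truncMeanBetween_mem {a b : ℝ} (hab : a < b) : truncMeanBetween a b ∈ Icc a b := by
  have hD := denom_pos hab
  have hlow : a * ∫ z in Ioo a b, stdPdf z ≤ ∫ z in Ioo a b, z * stdPdf z := by
    rw [← MeasureTheory.integral_const_mul]
    apply setIntegral_mono_on ((integrableOn_stdPdf a b).const_mul a)
      (integrableOn_mul_stdPdf a b) measurableSet_Ioo
    intro z hz
    exact mul_le_mul_of_nonneg_right hz.1.le (stdPdf_pos z).le
  have hhigh : (∫ z in Ioo a b, z * stdPdf z) ≤ b * ∫ z in Ioo a b, stdPdf z := by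
    rw [← MeasureTheory.integral_const_mul]
    apply setIntegral_mono_on (integrableOn_mul_stdPdf a b)
      ((integrableOn_stdPdf a b).const_mul b) measurableSet_Ioo
    intro z hz
    exact mul_le_mul_of_nonneg_right hz.2.le (stdPdf_pos z).le
  constructor
  · rw [truncMeanBetween, le_div_iff₀ hD]; exact hlow
  · rw [truncMeanBetween, div_le_iff₀ hD]; exact hhigh

lemma stdNormal_Ioo_le {a b : ℝ} (hab : a ≤ b) :
    stdNormal (Ioo a b) ≤ ENNReal.ofReal ((b - a) * (Real.sqrt (2 * Real.pi))⁻¹) := by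
  rw [stdNormal, gaussianReal_apply 0 one_ne_zero]
  calc ∫⁻ z in Ioo a b, gaussianPDF 0 1 z
      ≤ ∫⁻ _ in Ioo a b, ENNReal.ofReal ((Real.sqrt (2 * Real.pi))⁻¹) := by
        apply setLIntegral_mono measurable_const
        intro z _
        exact ENNReal.ofReal_le_ofReal (by rw [← stdPdf_eq]; exact stdPdf_le z)
    _ = ENNReal.ofReal ((Real.sqrt (2 * Real.pi))⁻¹) * volume (Ioo a b) :=
        setLIntegral_const _ _
    _ = ENNReal.ofReal ((b - a) * (Real.sqrt (2 * Real.pi))⁻¹) := by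
        rw [Real.volume_Ioo, ← ENNReal.ofReal_mul (by positivity), mul_comm]

lemma stdNormal_ge {K : ℝ} {s : Set ℝ} (hsub : s ⊆ Icc (-K) K) :
    ENNReal.ofReal (Real.exp (-K ^ 2 / 2) / Real.sqrt (2 * Real.pi)) * volume s
      ≤ stdNormal s := by
  rw [stdNormal, gaussianReal_apply 0 one_ne_zero, ← setLIntegral_const]
  apply setLIntegral_mono (measurable_gaussianPDF 0 1)
  intro z hz
  apply ENNReal.ofReal_le_ofReal
  rw [← stdPdf_eq]
  exact stdPdf_ge (abs_le.2 ⟨(hsub hz).1, (hsub hz).2⟩)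

lemma aTer_eq_zero_iff (m ε x z : ℝ) : aTer m ε x z = 0 ↔ |x * m + z| < ε := by
  unfold aTer
  split_ifs with h1 h2
  · simp only [one_ne_zero, false_iff, not_lt]
    exact h1.le.trans (le_abs_self _)
  · simp [h2]
  · norm_num [h2]

lemma ZTer_eq_between {m ε x z : ℝ} (h : |x * m + z| < ε) :
    ZTer m ε x z = truncMeanBetween (-(x * m) - ε) (-(x * m) + ε) := by
  unfold ZTer
  rw [if_neg (not_lt.2 ((le_abs_self _).trans h.le)), if_pos h]

/-- **Geometric update under the ternary policy.** For every `Cε > 0` there is a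
constant `C_w > 0` depending only on `Cε` such that, with `ε = Cε * w`, the
conditional probability that the interval width shrinks to at most `(5/6) * w`,
given that the on-the-fence message `a = 0` is sent, is at least `C_w`. -/

theorem ternary_geometric_update :
    ∀ Cε : ℝ, 0 < Cε →
      ∃ Cw : ℝ, 0 < Cw ∧
        ∀ θ l u : ℝ, -1 ≤ l → l ≤ θ → θ ≤ u → u ≤ 1 → l < u →
          ENNReal.ofReal Cw ≤
            (stdNormal2[|{p : ℝ × ℝ | aTer ((l + u) / 2) (Cε * (u - l)) p.1 p.2 = 0}])
              {p : ℝ × ℝ |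
                (updTer θ Cε l u p.1 p.2).2 - (updTer θ Cε l u p.1 p.2).1 ≤
                  5 / 6 * (u - l)} := by
  intro Cε hCε
  have hπ : (0:ℝ) < Real.sqrt (2 * Real.pi) := Real.sqrt_pos.2 (by positivity)
  set K : ℝ := 5 * Cε + 1 with hKdef
  set d : ℝ := Real.exp (-K ^ 2 / 2) / Real.sqrt (2 * Real.pi) with hddef
  have hd0 : 0 < d := by rw [hddef]; positivity
  refine ⟨Real.sqrt (2 * Real.pi) * d ^ 2, mul_pos hπ (pow_pos hd0 2), ?_⟩
  intro θ l u hl hlθ hθu hu hlu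
  set m : ℝ := (l + u) / 2 with hmdef
  set ε : ℝ := Cε * (u - l) with hεdef
  have hw : (0:ℝ) < u - l := sub_pos.2 hlu
  have hε0 : 0 < ε := mul_pos hCε hw
  have hεle : ε ≤ 2 * Cε := by
    rw [hεdef]
    nlinarith [mul_nonneg hCε.le (by linarith : (0:ℝ) ≤ 2 - (u - l))]
  have hm1 : -1 ≤ m := by rw [hmdef]; linarith
  have hm2 : m ≤ 1 := by rw [hmdef]; linarith
  -- the conditioning event
  have hAeq : {p : ℝ × ℝ | aTer m ε p.1 p.2 = 0} = {p : ℝ × ℝ | |p.1 * m + p.2| < ε} := by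
    ext p
    exact aTer_eq_zero_iff m ε p.1 p.2
  set A : Set (ℝ × ℝ) := {p : ℝ × ℝ | |p.1 * m + p.2| < ε} with hAdef
  have hmesA : MeasurableSet A :=
    measurableSet_lt (((measurable_fst.mul_const m).add measurable_snd).abs) measurable_const
  have hsliceA : ∀ x : ℝ, Prod.mk x ⁻¹' A = Ioo (-(x * m) - ε) (-(x * m) + ε) := by
    intro x
    ext z
    simp only [hAdef, mem_preimage, mem_setOf_eq, mem_Ioo, abs_lt]
    constructor <;> intro h <;> exact ⟨by linarith [h.1, h.2], by linarith [h.1, h.2]⟩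
  -- the good event
  set G : Set (ℝ × ℝ) := (Prod.fst ⁻¹' Icc (3 * Cε) (3 * Cε + 1)) ∩ A with hGdef
  have hmesG : MeasurableSet G := (measurable_fst measurableSet_Icc).inter hmesA
  -- upper bound for the measure of A
  have hμA : stdNormal2 A ≤ ENNReal.ofReal (2 * ε * (Real.sqrt (2 * Real.pi))⁻¹) := by
    rw [stdNormal2, Measure.prod_apply hmesA]
    calc ∫⁻ x, stdNormal (Prod.mk x ⁻¹' A) ∂stdNormal
        ≤ ∫⁻ _, ENNReal.ofReal (2 * ε * (Real.sqrt (2 * Real.pi))⁻¹) ∂stdNormal := by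
          apply lintegral_mono
          intro x
          dsimp only
          rw [hsliceA x]
          have h2 : (-(x * m) + ε) - (-(x * m) - ε) = 2 * ε := by ring
          have := stdNormal_Ioo_le (a := -(x * m) - ε) (b := -(x * m) + ε) (by linarith)
          rwa [h2] at this
      _ = ENNReal.ofReal (2 * ε * (Real.sqrt (2 * Real.pi))⁻¹) := by
          rw [lintegral_const, measure_univ, mul_one]
  -- lower bound for the measure of G
  have hμG : ENNReal.ofReal (2 * ε * d) * ENNReal.ofReal d ≤ stdNormal2 G := by
    rw [stdNormal2, Measure.prod_apply hmesG]
    have hbound : ∀ x ∈ Icc (3 * Cε) (3 * Cε + 1),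
        ENNReal.ofReal (2 * ε * d) ≤ stdNormal (Prod.mk x ⁻¹' G) := by
      intro x hx
      have hslice : Prod.mk x ⁻¹' G = Ioo (-(x * m) - ε) (-(x * m) + ε) := by
        rw [hGdef, preimage_inter, hsliceA x]
        have : Prod.mk x ⁻¹' ((Prod.fst : ℝ × ℝ → ℝ) ⁻¹' Icc (3 * Cε) (3 * Cε + 1)) = univ := by
          ext z
          simp [hx]
        rw [this, univ_inter]
      rw [hslice]
      have hx0' : (0:ℝ) ≤ x := le_trans (by linarith) hx.1
      have hxm1 : x * m ≤ 3 * Cε + 1 := by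
        nlinarith [mul_nonneg hx0' (sub_nonneg.2 hm2), hx.2]
      have hxm2 : -(3 * Cε + 1) ≤ x * m := by
        nlinarith [mul_nonneg hx0' (by linarith : (0:ℝ) ≤ m + 1), hx.2]
      have hsub : Ioo (-(x * m) - ε) (-(x * m) + ε) ⊆ Icc (-K) K := by
        intro z hz
        constructor
        · have := hz.1
          linarith
        · have := hz.2
          linarith
      have := stdNormal_ge hsub
      rw [Real.volume_Ioo] at this
      have h2 : (-(x * m) + ε) - (-(x * m) - ε) = 2 * ε := by ring
      rw [h2, ← hddef, ← ENNReal.ofReal_mul hd0.le, mul_comm d (2 * ε)] at this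
      exact this
    calc ENNReal.ofReal (2 * ε * d) * ENNReal.ofReal d
        ≤ ENNReal.ofReal (2 * ε * d) * stdNormal (Icc (3 * Cε) (3 * Cε + 1)) := by
          have hsubI : Icc (3 * Cε) (3 * Cε + 1) ⊆ Icc (-K) K := by
            intro y hy
            exact ⟨by linarith [hy.1], by linarith [hy.2]⟩
          have hI := stdNormal_ge hsubI
          rw [Real.volume_Icc, ← hddef] at hI
          have h1 : (3 * Cε + 1 - 3 * Cε : ℝ) = 1 := by ring
          rw [h1, ENNReal.ofReal_one, mul_one] at hI
          exact mul_le_mul' le_rfl hI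
      _ ≤ ∫⁻ x in Icc (3 * Cε) (3 * Cε + 1), stdNormal (Prod.mk x ⁻¹' G) ∂stdNormal := by
          rw [← setLIntegral_const]
          exact setLIntegral_mono (measurable_measure_prodMk_left hmesG) hbound
      _ ≤ ∫⁻ x, stdNormal (Prod.mk x ⁻¹' G) ∂stdNormal := setLIntegral_le_lintegral _ _
  -- G is contained in A ∩ B
  have hGsub : G ⊆ A ∩ {p : ℝ × ℝ |
      (updTer θ Cε l u p.1 p.2).2 - (updTer θ Cε l u p.1 p.2).1 ≤ 5 / 6 * (u - l)} := by
    rintro ⟨x, z⟩ ⟨hxI, hzA⟩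
    have hzA' : |x * m + z| < ε := hzA
    have hxI' : x ∈ Icc (3 * Cε) (3 * Cε + 1) := hxI
    refine ⟨hzA, ?_⟩
    have hx3 : 3 * Cε ≤ x := hxI'.1
    have hx0 : 0 < x := lt_of_lt_of_le (by linarith) hx3
    have hZdef : ZTer m ε x z = truncMeanBetween (-(x * m) - ε) (-(x * m) + ε) :=
      ZTer_eq_between hzA'
    have hZmem := truncMeanBetween_mem (a := -(x * m) - ε) (b := -(x * m) + ε) (by linarith)
    rw [← hZdef] at hZmem
    have hZ1 : -(x * m) - ε ≤ ZTer m ε x z := hZmem.1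
    have hZ2 : ZTer m ε x z ≤ -(x * m) + ε := hZmem.2
    have hub : -(ZTer m ε x z / x) ≤ m + (u - l) / 3 := by
      rw [← neg_div, div_le_iff₀ hx0]
      rw [hεdef] at hZ1
      nlinarith [mul_nonneg (sub_nonneg.2 hx3) hw.le]
    have hlb : m - (u - l) / 3 ≤ -(ZTer m ε x z / x) := by
      rw [← neg_div, le_div_iff₀ hx0]
      rw [hεdef] at hZ2
      nlinarith [mul_nonneg (sub_nonneg.2 hx3) hw.le]
    show (updTer θ Cε l u x z).2 - (updTer θ Cε l u x z).1 ≤ 5 / 6 * (u - l)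
    unfold updTer
    rw [← hmdef, ← hεdef]
    split_ifs with hb
    · dsimp only
      have h1 := min_le_right u (-(ZTer m ε x z / x))
      rw [hmdef] at hub
      linarith
    · dsimp only
      have h1 := le_max_right l (-(ZTer m ε x z / x))
      rw [hmdef] at hlb
      linarith
  -- conclude
  rw [hAeq, ProbabilityTheory.cond_apply hmesA]
  have hstep1 : stdNormal2 G ≤ stdNormal2 (A ∩ {p : ℝ × ℝ |
      (updTer θ Cε l u p.1 p.2).2 - (updTer θ Cε l u p.1 p.2).1 ≤ 5 / 6 * (u - l)}) :=
    measure_mono hGsub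
  have hc0 : (0:ℝ) < 2 * ε * (Real.sqrt (2 * Real.pi))⁻¹ := mul_pos (by linarith) (inv_pos.2 hπ)
  calc ENNReal.ofReal (Real.sqrt (2 * Real.pi) * d ^ 2)
      ≤ (ENNReal.ofReal (2 * ε * (Real.sqrt (2 * Real.pi))⁻¹))⁻¹ *
          (ENNReal.ofReal (2 * ε * d) * ENNReal.ofReal d) := by
        rw [← ENNReal.ofReal_mul (mul_nonneg (mul_nonneg (by norm_num) hε0.le) hd0.le),
          ← ENNReal.div_eq_inv_mul,
          ENNReal.le_div_iff_mul_le (Or.inl (ENNReal.ofReal_pos.2 hc0).ne')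
            (Or.inl ENNReal.ofReal_ne_top),
          ← ENNReal.ofReal_mul (mul_nonneg hπ.le (sq_nonneg d))]
        apply ENNReal.ofReal_le_ofReal
        apply le_of_eq
        have hs : Real.sqrt (2 * Real.pi) ≠ 0 := hπ.ne'
        field_simp
    _ ≤ (stdNormal2 A)⁻¹ * stdNormal2 (A ∩ {p : ℝ × ℝ |
          (updTer θ Cε l u p.1 p.2).2 - (updTer θ Cε l u p.1 p.2).1 ≤ 5 / 6 * (u - l)}) := by
        exact mul_le_mul' (ENNReal.inv_le_inv' hμA) (le_trans hμG hstep1)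


end
end

section
/- Expected regret from choosing the inferior arm under the ternary policy: for every constant C_ε > 0 there exists a constant C > 0 depending only on C_ε such that in the per-round ternary-policy model with ε = C_ε · w, E[ reg · 1{ b ≠ b* and a ≠ 0 } ] ≤ C · w², for all θ, l, u with -1 ≤ l ≤ θ ≤ u ≤ 1 and w = u - l > 0. -/
open MeasureTheory ProbabilityTheory Set Filter
open scoped Real Topology NNReal ENNReal

noncomputable section

namespace TernaryAux

lemma sqrt2pi_pos : 0 < Real.sqrt (2 * Real.pi) := Real.sqrt_pos.2 (by positivity)

lemma stdPdf_pos (z : ℝ) : 0 < stdPdf z := div_pos (Real.exp_pos _) sqrt2pi_pos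

lemma stdPdf_nonneg (z : ℝ) : 0 ≤ stdPdf z := (stdPdf_pos z).le

lemma stdPdf_le (z : ℝ) : stdPdf z ≤ stdPdf 0 := by
  have h : Real.exp (-z ^ 2 / 2) ≤ Real.exp (-0 ^ 2 / 2) := by
    apply Real.exp_le_exp.2; nlinarith [sq_nonneg z]
  exact (div_le_div_iff_of_pos_right sqrt2pi_pos).2 h

lemma continuous_stdPdf : Continuous stdPdf := by
  unfold stdPdf; fun_prop

lemma stdPdf_neg (z : ℝ) : stdPdf (-z) = stdPdf z := by simp [stdPdf]

lemma stdPdf_alt : stdPdf = fun z => Real.exp (-2⁻¹ * z ^ 2) * (Real.sqrt (2 * Real.pi))⁻¹ := by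
  funext z
  rw [stdPdf, div_eq_mul_inv]
  congr 2
  ring

lemma integrable_stdPdf : Integrable stdPdf := by
  rw [stdPdf_alt]
  exact (integrable_exp_neg_mul_sq (by norm_num)).mul_const _

lemma integrable_id_mul_stdPdf : Integrable (fun z => z * stdPdf z) := by
  have h := (integrable_mul_exp_neg_mul_sq (b := 2⁻¹) (by norm_num)).mul_const
      ((Real.sqrt (2 * Real.pi))⁻¹)
  refine h.congr (by simp [stdPdf_alt, mul_assoc])

lemma integrable_sq_mul_stdPdf : Integrable (fun z => z ^ 2 * stdPdf z) := by
  have h := (integrable_rpow_mul_exp_neg_mul_sq (b := 2⁻¹) (by norm_num) (s := 2)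
      (by norm_num)).mul_const ((Real.sqrt (2 * Real.pi))⁻¹)
  refine h.congr (Eventually.of_forall fun z => ?_)
  simp only [stdPdf_alt]
  beta_reduce
  rw [Real.rpow_two]
  ring

lemma stdPdf_eq_gaussianPDFReal : stdPdf = gaussianPDFReal 0 1 := by
  funext z
  simp [stdPdf, gaussianPDFReal, div_eq_mul_inv, mul_comm]

lemma integral_stdPdf : ∫ z, stdPdf z = 1 := by
  rw [stdPdf_eq_gaussianPDFReal]
  exact integral_gaussianPDFReal_eq_one 0 one_ne_zero


lemma hasDerivAt_stdPdf (z : ℝ) : HasDerivAt stdPdf (-z * stdPdf z) z := by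
  have h := ((((hasDerivAt_pow 2 z).neg.div_const 2).exp).div_const (Real.sqrt (2 * Real.pi)))
  refine h.congr_deriv ?_
  unfold stdPdf
  push_cast
  simp only [Pi.neg_apply]
  ring

lemma tendsto_stdPdf_atTop : Tendsto stdPdf atTop (𝓝 0) := by
  have h1 : Tendsto (fun z : ℝ => -z ^ 2 / 2) atTop atBot := by
    apply Tendsto.atBot_div_const (by norm_num)
    exact tendsto_neg_atBot_iff.2 (tendsto_pow_atTop two_ne_zero)
  have h2 : Tendsto (fun z : ℝ => Real.exp (-z ^ 2 / 2)) atTop (𝓝 0) :=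
    Real.tendsto_exp_atBot.comp h1
  unfold stdPdf
  simpa only [zero_div] using h2.div_const (Real.sqrt (2 * Real.pi))

lemma tendsto_id_mul_stdPdf_atTop : Tendsto (fun z : ℝ => z * stdPdf z) atTop (𝓝 0) := by
  have h := rpow_mul_exp_neg_mul_sq_isLittleO_exp_neg (b := 2⁻¹) (by norm_num) (s := 1)
  have hlin : Tendsto (fun x : ℝ => -(1/2) * x) atTop atBot := by
    have h' := tendsto_neg_atBot_iff.2 (tendsto_id.const_mul_atTop
      (by norm_num : (0:ℝ) < 1/2))
    refine h'.congr fun x => ?_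
    simp only [id_eq]
    ring
  have h0 : Tendsto (fun x : ℝ => Real.exp (-(1/2) * x)) atTop (𝓝 0) :=
    Real.tendsto_exp_atBot.comp hlin
  have h1 : Tendsto (fun x : ℝ => x ^ (1:ℝ) * Real.exp (-2⁻¹ * x ^ 2)) atTop (𝓝 0) :=
    h.isBigO.trans_tendsto h0
  have h2 := h1.mul_const ((Real.sqrt (2 * Real.pi))⁻¹)
  rw [zero_mul] at h2
  refine h2.congr (fun z => ?_)
  rw [Real.rpow_one, stdPdf_alt]
  ring

/-- Gaussian upper tail mass. -/
def S (c : ℝ) : ℝ := ∫ z in Ioi c, stdPdf z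

lemma S_pos (c : ℝ) : 0 < S c := by
  rw [S, setIntegral_pos_iff_support_of_nonneg_ae
    (ae_of_all _ fun z => stdPdf_nonneg z) integrable_stdPdf.integrableOn]
  have h : Function.support stdPdf ∩ Ioi c = Ioi c :=
    inter_eq_right.mpr fun z _ => (stdPdf_pos z).ne'
  rw [h, Real.volume_Ioi]
  simp

lemma S_le_one (c : ℝ) : S c ≤ 1 := by
  rw [S, ← integral_stdPdf]
  exact setIntegral_le_integral integrable_stdPdf (ae_of_all _ fun z => stdPdf_nonneg z)

lemma S_antitone : Antitone S := by
  intro a b hab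
  exact setIntegral_mono_set integrable_stdPdf.integrableOn
    (ae_of_all _ fun z => stdPdf_nonneg z) ((Ioi_subset_Ioi hab).eventuallyLE)

lemma integral_Ioi_id_mul (c : ℝ) : ∫ z in Ioi c, z * stdPdf z = stdPdf c := by
  have hd : ∀ z ∈ Ici c, HasDerivAt (fun y => -stdPdf y) (z * stdPdf z) z := by
    intro z _
    refine (hasDerivAt_stdPdf z).neg.congr_deriv ?_
    ring
  have h := integral_Ioi_of_hasDerivAt_of_tendsto' hd
    integrable_id_mul_stdPdf.integrableOn (by simpa using tendsto_stdPdf_atTop.neg)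
  simpa using h

lemma integrable_sub_mul (c : ℝ) : Integrable (fun z : ℝ => (z - c) * stdPdf z) := by
  have := integrable_id_mul_stdPdf.sub (integrable_stdPdf.const_mul c)
  refine this.congr (Eventually.of_forall fun z => ?_)
  simp only [Pi.sub_apply]
  ring

lemma integral_Ioi_sq_mul (c : ℝ) :
    ∫ z in Ioi c, z ^ 2 * stdPdf z = c * stdPdf c + S c := by
  have hd : ∀ z ∈ Ici c, HasDerivAt (fun y => -(y * stdPdf y))
      (z ^ 2 * stdPdf z - stdPdf z) z := by
    intro z _
    refine ((hasDerivAt_id z).mul (hasDerivAt_stdPdf z)).neg.congr_deriv ?_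
    simp only [id_eq]
    ring
  have hint : IntegrableOn (fun z : ℝ => z ^ 2 * stdPdf z - stdPdf z) (Ioi c) :=
    (integrable_sq_mul_stdPdf.sub integrable_stdPdf).integrableOn
  have h := integral_Ioi_of_hasDerivAt_of_tendsto' hd hint
    (by simpa using tendsto_id_mul_stdPdf_atTop.neg)
  rw [integral_sub integrable_sq_mul_stdPdf.integrableOn integrable_stdPdf.integrableOn] at h
  have hS : (∫ z in Ioi c, stdPdf z) = S c := rfl
  rw [hS] at h
  simp only [zero_sub, neg_neg] at h
  linarith

lemma S_mul_le {c : ℝ} (hc : 0 < c) : S c * c ≤ stdPdf c := by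
  have hmono : ∫ z in Ioi c, c * stdPdf z ≤ ∫ z in Ioi c, z * stdPdf z := by
    refine setIntegral_mono_on ((integrable_stdPdf.const_mul c).integrableOn)
      integrable_id_mul_stdPdf.integrableOn measurableSet_Ioi fun z hz => ?_
    exact mul_le_mul_of_nonneg_right (le_of_lt hz) (stdPdf_nonneg z)
  rw [integral_const_mul, integral_Ioi_id_mul] at hmono
  have : (∫ z in Ioi c, stdPdf z) = S c := rfl
  rw [this] at hmono
  linarith [hmono]

lemma S_le_cubic {c : ℝ} (hc : 2 ≤ c) :
    S c ≤ stdPdf c * ((c ^ 4 - c ^ 2 + 3) / c ^ 5) := by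
  have hc0 : (0:ℝ) < c := by linarith
  set p : ℝ → ℝ := fun y => (y ^ 4 - y ^ 2 + 3) / y ^ 5 with hp
  have hd : ∀ z ∈ Ici c, HasDerivAt (fun y => -(stdPdf y * p y))
      (stdPdf z * ((z ^ 6 + 15) / z ^ 6)) z := by
    intro z hz
    have hz0 : z ≠ 0 := by have : (2:ℝ) ≤ z := le_trans hc hz; linarith
    have hz5 : z ^ 5 ≠ 0 := pow_ne_zero 5 hz0
    have hnum : HasDerivAt (fun y : ℝ => y ^ 4 - y ^ 2 + 3)
        (4 * z ^ 3 - 2 * z ^ 1) z := by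
      exact_mod_cast ((hasDerivAt_pow 4 z).sub (hasDerivAt_pow 2 z)).add_const 3
    have hden : HasDerivAt (fun y : ℝ => y ^ 5) (5 * z ^ 4) z := by
      exact_mod_cast hasDerivAt_pow 5 z
    have hpz : HasDerivAt p
        (((4 * z ^ 3 - 2 * z ^ 1) * z ^ 5 - (z ^ 4 - z ^ 2 + 3) * (5 * z ^ 4)) / (z ^ 5) ^ 2)
        z := hnum.div hden hz5
    refine ((hasDerivAt_stdPdf z).mul hpz).neg.congr_deriv ?_
    simp only [hp]
    field_simp
    ring
  have hint : IntegrableOn (fun z : ℝ => stdPdf z * ((z ^ 6 + 15) / z ^ 6)) (Ioi c) := by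
    refine Integrable.mono' ((integrable_stdPdf.const_mul 2).integrableOn) ?_ ?_
    · refine (continuous_stdPdf.measurable.mul ?_).aestronglyMeasurable
      exact ((measurable_id.pow_const 6).add_const 15).div (measurable_id.pow_const 6)
    · refine (ae_restrict_iff' measurableSet_Ioi).2 (ae_of_all _ fun z hz => ?_)
      have hz2 : (2:ℝ) ≤ z := le_trans hc (le_of_lt hz)
      have hz6 : (0:ℝ) < z ^ 6 := by positivity
      have hz64 : (64:ℝ) ≤ z ^ 6 := by
        have := pow_le_pow_left₀ (by norm_num : (0:ℝ) ≤ 2) hz2 6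
        norm_num at this
        linarith
      have hdivle : (z ^ 6 + 15) / z ^ 6 ≤ 2 := by
        rw [div_le_iff₀ hz6]; linarith
      have hdiv0 : (0:ℝ) ≤ (z ^ 6 + 15) / z ^ 6 := by positivity
      have h1 : (0:ℝ) ≤ stdPdf z * ((z ^ 6 + 15) / z ^ 6) :=
        mul_nonneg (stdPdf_nonneg z) hdiv0
      rw [Real.norm_eq_abs, abs_of_nonneg h1]
      exact (mul_le_mul_of_nonneg_left hdivle (stdPdf_nonneg z)).trans_eq
        (mul_comm _ _)
  have htend : Tendsto (fun y : ℝ => -(stdPdf y * p y)) atTop (𝓝 0) := by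
    have hpeq : ∀ᶠ y in (atTop : Filter ℝ), y⁻¹ - (y⁻¹) ^ 3 + 3 * (y⁻¹) ^ 5 = p y := by
      filter_upwards [eventually_gt_atTop (0:ℝ)] with y hy
      rw [hp]
      field_simp
    have hptend : Tendsto p atTop (𝓝 (0 - 0 ^ 3 + 3 * 0 ^ 5)) := by
      refine Tendsto.congr' hpeq ?_
      exact (tendsto_inv_atTop_zero.sub (tendsto_inv_atTop_zero.pow 3)).add
        ((tendsto_inv_atTop_zero.pow 5).const_mul 3)
    have := (tendsto_stdPdf_atTop.mul hptend).neg
    simpa using this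
  have hFTC := integral_Ioi_of_hasDerivAt_of_tendsto' hd hint htend
  have hmono : S c ≤ ∫ z in Ioi c, stdPdf z * ((z ^ 6 + 15) / z ^ 6) := by
    refine setIntegral_mono_on integrable_stdPdf.integrableOn hint measurableSet_Ioi
      fun z hz => ?_
    have hz2 : (2:ℝ) ≤ z := le_trans hc (le_of_lt hz)
    have hz6 : (0:ℝ) < z ^ 6 := by positivity
    have : (1:ℝ) ≤ (z ^ 6 + 15) / z ^ 6 := by
      rw [le_div_iff₀ hz6]; linarith
    exact le_mul_of_one_le_right (stdPdf_nonneg z) this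
  rw [hFTC] at hmono
  simpa only [zero_sub, neg_neg] using hmono

/-- `G c = φ c - c * S c`, the Gaussian "excess mass" function. -/
def G (c : ℝ) : ℝ := stdPdf c - c * S c

lemma G_eq (c : ℝ) : G c = ∫ z in Ioi c, (z - c) * stdPdf z := by
  have h : ∫ z in Ioi c, (z - c) * stdPdf z
      = (∫ z in Ioi c, z * stdPdf z) - ∫ z in Ioi c, c * stdPdf z := by
    rw [← integral_sub integrable_id_mul_stdPdf.integrableOn
      ((integrable_stdPdf.const_mul c).integrableOn)]
    congr 1
    funext z
    ring
  rw [G, h, integral_Ioi_id_mul, integral_const_mul]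
  rfl

lemma G_pos (c : ℝ) : 0 < G c := by
  rw [G_eq]
  rw [setIntegral_pos_iff_support_of_nonneg_ae]
  · have h : Function.support (fun z => (z - c) * stdPdf z) ∩ Ioi c = Ioi c := by
      refine inter_eq_right.mpr fun z hz => ?_
      have h1 : (0:ℝ) < z - c := sub_pos.2 hz
      exact (mul_pos h1 (stdPdf_pos z)).ne'
    rw [h, Real.volume_Ioi]
    simp
  · refine (ae_restrict_iff' measurableSet_Ioi).2 (ae_of_all _ fun z hz => ?_)
    exact mul_nonneg (by linarith [mem_Ioi.1 hz]) (stdPdf_nonneg z)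
  · exact (integrable_sub_mul c).integrableOn

lemma G_two_le {c : ℝ} (hc : c ≤ 2) : G 2 ≤ G c := by
  rw [G_eq, G_eq]
  calc ∫ z in Ioi (2:ℝ), (z - 2) * stdPdf z
      ≤ ∫ z in Ioi (2:ℝ), (z - c) * stdPdf z := by
        refine setIntegral_mono_on (integrable_sub_mul 2).integrableOn
          (integrable_sub_mul c).integrableOn measurableSet_Ioi fun z _ => ?_
        exact mul_le_mul_of_nonneg_right (by linarith) (stdPdf_nonneg z)
    _ ≤ ∫ z in Ioi c, (z - c) * stdPdf z := by
        refine setIntegral_mono_set (integrable_sub_mul c).integrableOn ?_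
          ((Ioi_subset_Ioi hc).eventuallyLE)
        refine (ae_restrict_iff' measurableSet_Ioi).2 (ae_of_all _ fun z hz => ?_)
        exact mul_nonneg (by linarith [mem_Ioi.1 hz]) (stdPdf_nonneg z)

/-- The key absolute constant. -/
def kappa : ℝ := G 2

lemma kappa_pos : 0 < kappa := G_pos 2

lemma tma_eq (c : ℝ) : truncMeanAbove c = stdPdf c / S c := by
  rw [truncMeanAbove, integral_Ioi_id_mul]
  rfl

lemma tma_pos (c : ℝ) : 0 < truncMeanAbove c := by
  rw [tma_eq]; exact div_pos (stdPdf_pos c) (S_pos c)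

lemma lt_tma (c : ℝ) : c < truncMeanAbove c := by
  rw [tma_eq, lt_div_iff₀ (S_pos c)]
  have := G_pos c
  rw [G] at this
  linarith

lemma tail_le {t : ℝ} (ht : 0 ≤ t) : ∫ z in Ioi t, (z - t) * stdPdf z ≤ stdPdf 0 := by
  calc ∫ z in Ioi t, (z - t) * stdPdf z ≤ ∫ z in Ioi t, z * stdPdf z := by
        refine setIntegral_mono_on (integrable_sub_mul t).integrableOn
          integrable_id_mul_stdPdf.integrableOn measurableSet_Ioi fun z _ => ?_
        exact mul_le_mul_of_nonneg_right (by linarith) (stdPdf_nonneg z)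
    _ = stdPdf t := integral_Ioi_id_mul t
    _ ≤ stdPdf 0 := stdPdf_le t

lemma integrable_mul_sub_mul (t : ℝ) :
    Integrable (fun z : ℝ => z * ((z - t) * stdPdf z)) := by
  have := integrable_sq_mul_stdPdf.sub (integrable_id_mul_stdPdf.const_mul t)
  refine this.congr (Eventually.of_forall fun z => ?_)
  simp only [Pi.sub_apply]
  ring

lemma tail_le_sq {t : ℝ} (ht : 2 ≤ t) :
    ∫ z in Ioi t, (z - t) * stdPdf z ≤ stdPdf 0 / t ^ 2 := by
  have ht0 : (0:ℝ) < t := by linarith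
  have h1 : t * ∫ z in Ioi t, (z - t) * stdPdf z ≤ S t := by
    have hmono : ∫ z in Ioi t, t * ((z - t) * stdPdf z)
        ≤ ∫ z in Ioi t, z * ((z - t) * stdPdf z) := by
      refine setIntegral_mono_on (((integrable_sub_mul t).const_mul t).integrableOn)
        (integrable_mul_sub_mul t).integrableOn measurableSet_Ioi fun z hz => ?_
      refine mul_le_mul_of_nonneg_right (le_of_lt hz) ?_
      exact mul_nonneg (by linarith [mem_Ioi.1 hz]) (stdPdf_nonneg z)
    rw [integral_const_mul] at hmono
    have h2 : ∫ z in Ioi t, z * ((z - t) * stdPdf z) = S t := by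
      have h3 : ∫ z in Ioi t, z * ((z - t) * stdPdf z)
          = (∫ z in Ioi t, z ^ 2 * stdPdf z) - ∫ z in Ioi t, t * (z * stdPdf z) := by
        rw [← integral_sub integrable_sq_mul_stdPdf.integrableOn
          ((integrable_id_mul_stdPdf.const_mul t).integrableOn)]
        congr 1
        funext z
        ring
      rw [h3, integral_Ioi_sq_mul, integral_const_mul, integral_Ioi_id_mul]
      ring
    rw [h2] at hmono
    exact hmono
  have h4 : S t * t ≤ stdPdf t := S_mul_le ht0
  have h5 : stdPdf t ≤ stdPdf 0 := stdPdf_le t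
  rw [le_div_iff₀ (by positivity : (0:ℝ) < t ^ 2)]
  nlinarith [S_pos t]

lemma interval_bound {a b D : ℝ} (h1 : b - a ≤ D) (hD : 0 ≤ D) :
    ∫ z in Ioc a b, (b - z) * stdPdf z ≤ stdPdf 0 * D ^ 2 := by
  rcases le_or_gt a b with hab | hab
  · have hcont : IntegrableOn (fun z : ℝ => (b - z) * stdPdf z) (Ioc a b) :=
      ((continuous_const.sub continuous_id).mul continuous_stdPdf).integrableOn_Ioc
    have hmono : ∫ z in Ioc a b, (b - z) * stdPdf z
        ≤ ∫ _z in Ioc a b, (b - a) * stdPdf 0 := by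
      refine setIntegral_mono_on hcont
        (integrableOn_const measure_Ioc_lt_top.ne) measurableSet_Ioc fun z hz => ?_
      have h2 : b - z ≤ b - a := by linarith [hz.1]
      have h3 : 0 ≤ b - z := by linarith [hz.2]
      exact mul_le_mul h2 (stdPdf_le z) (stdPdf_nonneg z) (by linarith)
    have hconst : ∫ _z in Ioc a b, (b - a) * stdPdf 0 = (b - a) * ((b - a) * stdPdf 0) := by
      rw [setIntegral_const, measureReal_def, Real.volume_Ioc, ENNReal.toReal_ofReal (by linarith), smul_eq_mul]
    have hba : 0 ≤ b - a := by linarith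
    have hsq : (b - a) ^ 2 ≤ D ^ 2 := by nlinarith
    calc ∫ z in Ioc a b, (b - z) * stdPdf z ≤ (b - a) * ((b - a) * stdPdf 0) :=
          hmono.trans_eq hconst
      _ = stdPdf 0 * (b - a) ^ 2 := by ring
      _ ≤ stdPdf 0 * D ^ 2 := mul_le_mul_of_nonneg_left hsq (stdPdf_nonneg 0)
  · rw [Ioc_eq_empty (not_lt.2 hab.le)]
    simp only [Measure.restrict_empty, integral_zero_measure]
    exact mul_nonneg (stdPdf_nonneg 0) (sq_nonneg D)

lemma hard_bound {c t D : ℝ} (ht : truncMeanAbove c ≤ t) (hD : t - c ≤ D) :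
    ∫ z in Ioi t, (z - t) * stdPdf z ≤ stdPdf 0 * (1 / kappa ^ 2 + 16) * D ^ 2 := by
  have hS := S_pos c
  have hSle := S_le_one c
  have hφc := stdPdf_pos c
  have htpos : 0 < t := (tma_pos c).trans_le ht
  rcases le_or_gt c 2 with hc | hc
  · have hgap : kappa ≤ t - c := by
      have h1 : G c ≤ truncMeanAbove c - c := by
        rw [tma_eq, le_sub_iff_add_le, le_div_iff₀ hS]
        have hGpos := G_pos c
        rw [G] at hGpos ⊢
        nlinarith
      have h3 : G 2 ≤ G c := G_two_le hc
      rw [kappa]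
      linarith
    have hκ := kappa_pos
    have hDκ : kappa ≤ D := le_trans hgap hD
    have h4 : 1 ≤ D ^ 2 / kappa ^ 2 := by
      rw [le_div_iff₀ (pow_pos kappa_pos 2)]
      nlinarith
    calc ∫ z in Ioi t, (z - t) * stdPdf z ≤ stdPdf 0 := tail_le htpos.le
      _ ≤ stdPdf 0 * (D ^ 2 / kappa ^ 2) :=
          le_mul_of_one_le_right (stdPdf_nonneg 0) h4
      _ ≤ stdPdf 0 * (1 / kappa ^ 2 + 16) * D ^ 2 := by
          have h5 : (0:ℝ) ≤ stdPdf 0 * 16 * D ^ 2 :=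
            mul_nonneg (mul_nonneg (stdPdf_nonneg 0) (by norm_num)) (sq_nonneg D)
          have h6 : stdPdf 0 * (D ^ 2 / kappa ^ 2) = stdPdf 0 * (1 / kappa ^ 2) * D ^ 2 := by
            ring
          rw [h6]
          nlinarith
  · -- c > 2
    have hc2 : (2:ℝ) ≤ c := hc.le
    have hc0 : (0:ℝ) < c := by linarith
    have hSmul : S c * c ^ 5 ≤ stdPdf c * (c ^ 4 - c ^ 2 + 3) := by
      have h5 := S_le_cubic hc2
      have h6 : stdPdf c * ((c ^ 4 - c ^ 2 + 3) / c ^ 5) * c ^ 5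
          = stdPdf c * (c ^ 4 - c ^ 2 + 3) := by
        field_simp
      nlinarith [pow_pos hc0 5]
    have h4c : (4:ℝ) ≤ c ^ 2 := by nlinarith
    have h5c : 12 * c ^ 2 ≤ 3 * c ^ 2 * c ^ 2 := by nlinarith
    have hpoly : (c ^ 4 - c ^ 2 + 3) * (1 + 4 * c ^ 2) ≤ 4 * c ^ 6 := by nlinarith [h4c, h5c]
    have hkey : S c * (1 + 4 * c ^ 2) ≤ 4 * c * stdPdf c := by
      have hA : S c * (1 + 4 * c ^ 2) * c ^ 5 ≤ stdPdf c * ((c ^ 4 - c ^ 2 + 3) * (1 + 4 * c ^ 2)) := by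
        nlinarith [sq_nonneg c]
      have hB : stdPdf c * ((c ^ 4 - c ^ 2 + 3) * (1 + 4 * c ^ 2)) ≤ stdPdf c * (4 * c ^ 6) :=
        mul_le_mul_of_nonneg_left hpoly (stdPdf_nonneg c)
      have hC : S c * (1 + 4 * c ^ 2) * c ^ 5 ≤ (4 * c * stdPdf c) * c ^ 5 := by
        calc S c * (1 + 4 * c ^ 2) * c ^ 5 ≤ stdPdf c * (4 * c ^ 6) := le_trans hA hB
          _ = (4 * c * stdPdf c) * c ^ 5 := by ring
      exact le_of_mul_le_mul_right hC (by positivity)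
    have hq : 1 / (4 * c) ≤ t - c := by
      have h6 : (c + 1 / (4 * c)) * S c ≤ stdPdf c := by
        have he : (c + 1 / (4 * c)) = (1 + 4 * c ^ 2) / (4 * c) := by
          field_simp
          ring
        rw [he, div_mul_eq_mul_div, div_le_iff₀ (by positivity : (0:ℝ) < 4 * c)]
        nlinarith
      have h7 : c + 1 / (4 * c) ≤ truncMeanAbove c := by
        rw [tma_eq, le_div_iff₀ hS]
        exact h6
      linarith
    have hD0 : 0 < D := lt_of_lt_of_le (by positivity) (le_trans hq hD)
    have hcD : 1 ≤ 4 * c * D := by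
      have h8 : 1 / (4 * c) ≤ D := le_trans hq hD
      rw [div_le_iff₀ (by positivity : (0:ℝ) < 4 * c)] at h8
      linarith
    have ht2 : 2 ≤ t := le_trans hc2 (le_trans (lt_tma c).le ht)
    have hct : c ≤ t := (lt_tma c).le.trans ht
    have htD : 1 ≤ 4 * t * D := by
      nlinarith [mul_nonneg (sub_nonneg.2 hct) hD0.le]
    calc ∫ z in Ioi t, (z - t) * stdPdf z ≤ stdPdf 0 / t ^ 2 := tail_le_sq ht2
      _ ≤ stdPdf 0 * (16 * D ^ 2) := by
          rw [div_le_iff₀ (by positivity : (0:ℝ) < t ^ 2)]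
          have h16 : (0:ℝ) ≤ 16 * D ^ 2 * t ^ 2 - 1 := by
            nlinarith [sq_nonneg (4 * t * D - 1)]
          nlinarith [mul_nonneg (stdPdf_nonneg 0) h16]
      _ ≤ stdPdf 0 * (1 / kappa ^ 2 + 16) * D ^ 2 := by
          have h9 : (0:ℝ) ≤ stdPdf 0 * (1 / kappa ^ 2) * D ^ 2 :=
            mul_nonneg (mul_nonneg (stdPdf_nonneg 0)
              (div_nonneg zero_le_one (sq_nonneg kappa))) (sq_nonneg D)
          nlinarith


/-! ### Reflection lemmas -/

lemma integral_Iio_reflect (f : ℝ → ℝ) (c : ℝ) :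
    ∫ z in Iio c, f z = ∫ z in Ioi (-c), f (-z) := by
  rw [setIntegral_congr_set (Iio_ae_eq_Iic (a := c))]
  have h := integral_comp_neg_Iic c (fun y => f (-y))
  simp only [neg_neg] at h
  exact h

lemma integral_Iio_id_mul (c : ℝ) : ∫ z in Iio c, z * stdPdf z = -stdPdf c := by
  rw [integral_Iio_reflect]
  have h : ∀ z : ℝ, -z * stdPdf (-z) = -(z * stdPdf z) := by
    intro z; rw [stdPdf_neg]; ring
  rw [show (fun z => -z * stdPdf (-z)) = (fun z => -(z * stdPdf z)) from funext h]
  rw [integral_neg, integral_Ioi_id_mul, stdPdf_neg]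

lemma integral_Iio_stdPdf (c : ℝ) : ∫ z in Iio c, stdPdf z = S (-c) := by
  rw [integral_Iio_reflect]
  simp only [stdPdf_neg]
  rfl

lemma tmb_eq (c : ℝ) : truncMeanBelow c = -truncMeanAbove (-c) := by
  rw [truncMeanBelow, tma_eq, integral_Iio_id_mul, integral_Iio_stdPdf, stdPdf_neg,
    neg_div]

lemma stdCdf_eq (c : ℝ) : stdCdf c = S (-c) := integral_Iio_stdPdf c

/-! ### Measurability -/

lemma measurable_tma : Measurable truncMeanAbove := by
  rw [show truncMeanAbove = fun c => stdPdf c / S c from funext tma_eq]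
  exact continuous_stdPdf.measurable.div S_antitone.measurable

lemma measurable_tmb : Measurable truncMeanBelow := by
  rw [show truncMeanBelow = fun c => -truncMeanAbove (-c) from funext tmb_eq]
  exact (measurable_tma.comp measurable_neg).neg

lemma measurable_stdCdf : Measurable stdCdf := by
  rw [show stdCdf = fun c => S (-c) from funext stdCdf_eq]
  exact (S_antitone.measurable).comp measurable_neg

lemma setIntegral_Ioo_split {f : ℝ → ℝ} (hf : Integrable f) {a b : ℝ} (hab : a ≤ b) :
    ∫ z in Ioo a b, f z = (∫ z in Iio b, f z) - ∫ z in Iio a, f z := by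
  have hu : Iio a ∪ Ico a b = Iio b := Iio_union_Ico_eq_Iio hab
  have hd : Disjoint (Iio a) (Ico a b) :=
    (Iio_disjoint_Ici le_rfl).mono_right Ico_subset_Ici_self
  have := setIntegral_union hd measurableSet_Ico hf.integrableOn hf.integrableOn (μ := volume)
  rw [hu] at this
  rw [setIntegral_congr_set (Ioo_ae_eq_Ico (a := a) (b := b))]
  linarith [this]

lemma tmid_eq {a b : ℝ} (hab : a ≤ b) :
    truncMeanBetween a b = (stdPdf a - stdPdf b) / (stdCdf b - stdCdf a) := by
  rw [truncMeanBetween, setIntegral_Ioo_split integrable_id_mul_stdPdf hab,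
    setIntegral_Ioo_split integrable_stdPdf hab, integral_Iio_id_mul, integral_Iio_id_mul]
  rw [stdCdf, stdCdf]
  ring_nf

lemma measurable_tmid (m ε : ℝ) (hε : 0 < ε) :
    Measurable (fun x : ℝ => truncMeanBetween (-(x * m) - ε) (-(x * m) + ε)) := by
  have h : (fun x : ℝ => truncMeanBetween (-(x * m) - ε) (-(x * m) + ε))
      = fun x => (stdPdf (-(x * m) - ε) - stdPdf (-(x * m) + ε)) /
          (stdCdf (-(x * m) + ε) - stdCdf (-(x * m) - ε)) := by
    funext x
    exact tmid_eq (by linarith)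
  rw [h]
  have hx : Measurable (fun x : ℝ => -(x * m)) := (measurable_id.mul_const m).neg
  exact ((continuous_stdPdf.measurable.comp (hx.sub_const ε)).sub
    (continuous_stdPdf.measurable.comp (hx.add_const ε))).div
    ((measurable_stdCdf.comp (hx.add_const ε)).sub (measurable_stdCdf.comp (hx.sub_const ε)))


/-! ### The regret integrand -/

/-- The per-round regret integrand restricted to `a ≠ 0`. -/
def F (θ m ε x z : ℝ) : ℝ :=
  if bTer θ m ε x z ≠ bStar θ x z ∧ aTer m ε x z ≠ 0 then |x * θ + z| else 0

lemma F_nonneg (θ m ε x z : ℝ) : 0 ≤ F θ m ε x z := by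
  rw [F]; split
  · exact abs_nonneg _
  · exact le_refl 0

lemma F_le (θ m ε x z : ℝ) : F θ m ε x z ≤ |x * θ + z| := by
  rw [F]; split
  · exact le_refl _
  · exact abs_nonneg _

lemma measurable_F (θ m ε : ℝ) (hε : 0 < ε) :
    Measurable (fun p : ℝ × ℝ => F θ m ε p.1 p.2) := by
  have hxm : Measurable (fun p : ℝ × ℝ => p.1 * m + p.2) :=
    (measurable_fst.mul_const m).add measurable_snd
  have hs1 : MeasurableSet {p : ℝ × ℝ | ε < p.1 * m + p.2} :=
    measurableSet_lt measurable_const hxm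
  have hs2 : MeasurableSet {p : ℝ × ℝ | |p.1 * m + p.2| < ε} :=
    measurableSet_lt hxm.abs measurable_const
  have hZ : Measurable (fun p : ℝ × ℝ => ZTer m ε p.1 p.2) := by
    unfold ZTer
    refine Measurable.ite hs1 ?_ (Measurable.ite hs2 ?_ ?_)
    · exact measurable_tma.comp ((measurable_fst.mul_const m).neg.add_const ε)
    · exact (measurable_tmid m ε hε).comp measurable_fst
    · exact measurable_tmb.comp ((measurable_fst.mul_const m).neg.sub_const ε)
  have hxθ : Measurable (fun p : ℝ × ℝ => p.1 * θ + ZTer m ε p.1 p.2) :=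
    (measurable_fst.mul_const θ).add hZ
  have hbT : Measurable (fun p : ℝ × ℝ => bTer θ m ε p.1 p.2) := by
    unfold bTer
    exact Measurable.ite (measurableSet_lt measurable_const hxθ)
      measurable_const measurable_const
  have hbS : Measurable (fun p : ℝ × ℝ => bStar θ p.1 p.2) := by
    unfold bStar
    exact Measurable.ite (measurableSet_lt measurable_const
      ((measurable_fst.mul_const θ).add measurable_snd)) measurable_const measurable_const
  have haT : Measurable (fun p : ℝ × ℝ => aTer m ε p.1 p.2) := by
    unfold aTer
    exact Measurable.ite hs1 measurable_const
      (Measurable.ite hs2 measurable_const measurable_const)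
  have hset : MeasurableSet {p : ℝ × ℝ |
      bTer θ m ε p.1 p.2 ≠ bStar θ p.1 p.2 ∧ aTer m ε p.1 p.2 ≠ 0} := by
    have h1 : MeasurableSet {p : ℝ × ℝ | bTer θ m ε p.1 p.2 = bStar θ p.1 p.2} :=
      measurableSet_eq_fun hbT hbS
    have h2 : MeasurableSet {p : ℝ × ℝ | aTer m ε p.1 p.2 = 0} :=
      measurableSet_eq_fun haT measurable_const
    exact (h1.compl).inter (h2.compl)
  unfold F
  exact Measurable.ite hset ((measurable_fst.mul_const θ).add measurable_snd).abs
    measurable_const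

lemma measurable_F_snd (θ m ε x : ℝ) (hε : 0 < ε) :
    Measurable (fun z => F θ m ε x z) :=
  (measurable_F θ m ε hε).comp (measurable_const.prodMk measurable_id)

lemma integrable_F_mul (θ m ε x : ℝ) (hε : 0 < ε) :
    Integrable (fun z => F θ m ε x z * stdPdf z) := by
  have h2 : Integrable (fun z : ℝ => |z| * stdPdf z) := by
    refine integrable_id_mul_stdPdf.abs.congr (Eventually.of_forall fun z => ?_)
    show |z * stdPdf z| = |z| * stdPdf z
    rw [abs_mul, abs_of_nonneg (stdPdf_nonneg z)]
  have hb : Integrable (fun z : ℝ => (|x * θ| + |z|) * stdPdf z) := by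
    refine ((integrable_stdPdf.const_mul |x * θ|).add h2).congr
      (Eventually.of_forall fun z => ?_)
    simp only [Pi.add_apply]
    ring
  refine hb.mono' ((measurable_F_snd θ m ε x hε).mul
    continuous_stdPdf.measurable).aestronglyMeasurable (ae_of_all _ fun z => ?_)
  rw [Real.norm_eq_abs, abs_of_nonneg (mul_nonneg (F_nonneg θ m ε x z) (stdPdf_nonneg z))]
  exact mul_le_mul_of_nonneg_right ((F_le θ m ε x z).trans (abs_add_le _ _)) (stdPdf_nonneg z)

/-- Final constant for the per-x bound. -/
def KK : ℝ := stdPdf 0 * (17 + 1 / kappa ^ 2)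

lemma KK_pos : 0 < KK := by
  refine mul_pos (stdPdf_pos 0) ?_
  have : (0:ℝ) ≤ 1 / kappa ^ 2 := by positivity
  linarith

lemma phi0_le_KK : stdPdf 0 ≤ KK := by
  rw [KK]
  refine le_mul_of_one_le_right (stdPdf_nonneg 0) ?_
  have : (0:ℝ) ≤ 1 / kappa ^ 2 := by positivity
  linarith

lemma hard_const_le_KK : stdPdf 0 * (1 / kappa ^ 2 + 16) ≤ KK := by
  rw [KK]
  refine mul_le_mul_of_nonneg_left ?_ (stdPdf_nonneg 0)
  linarith

lemma region_above (θ m ε w x : ℝ) (hε : 0 < ε) (hθm : |θ - m| ≤ w / 2) :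
    ∫ z in Ioi (-(x * m) + ε), F θ m ε x z * stdPdf z ≤ KK * (|x| * w / 2) ^ 2 := by
  set c := -(x * m) + ε with hc
  set A := truncMeanAbove c with hA
  set t := -(x * θ) with htdef
  have hD : t - c ≤ |x| * w / 2 := by
    have h1 : -(x * (θ - m)) ≤ |x * (θ - m)| := neg_le_abs _
    have h2 : |x * (θ - m)| = |x| * |θ - m| := abs_mul _ _
    have h3 : |x| * |θ - m| ≤ |x| * (w / 2) := mul_le_mul_of_nonneg_left hθm (abs_nonneg x)
    have h4 : t - c = -(x * (θ - m)) - ε := by rw [htdef, hc]; ring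
    linarith
  have hD0 : (0:ℝ) ≤ |x| * w / 2 := by
    rcases le_or_gt 0 w with h | h
    · positivity
    · have : |θ - m| < 0 := by
        calc |θ - m| ≤ w / 2 := hθm
          _ < 0 := by linarith
      linarith [abs_nonneg (θ - m)]
  by_cases hb : 0 < x * θ + A
  · have hcong : EqOn (fun z => F θ m ε x z * stdPdf z)
        ((Iic t).indicator (fun y => (t - y) * stdPdf y)) (Ioi c) := by
      intro z hz
      have hmem : ε < x * m + z := by
        have h5 := mem_Ioi.1 hz
        rw [hc] at h5
        linarith
      have haz : aTer m ε x z = 1 := by unfold aTer; rw [if_pos hmem]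
      have hZ : ZTer m ε x z = A := by
        unfold ZTer; rw [if_pos hmem, ← hc]
      have hbz : bTer θ m ε x z = 1 := by unfold bTer; rw [hZ, if_pos hb]
      by_cases hzt : z ≤ t
      · have hxz : x * θ + z ≤ 0 := by rw [htdef] at hzt; linarith
        have hbstar : bStar θ x z = -1 := by unfold bStar; rw [if_neg (not_lt.2 hxz)]
        show F θ m ε x z * stdPdf z = _
        unfold F
        rw [if_pos ⟨by rw [hbz, hbstar]; norm_num, by rw [haz]; norm_num⟩,
          indicator_of_mem (mem_Iic.2 hzt)]
        have habs : |x * θ + z| = t - z := by rw [abs_of_nonpos hxz, htdef]; ring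
        rw [habs]
      · push_neg at hzt
        have hxz : 0 < x * θ + z := by rw [htdef] at hzt; linarith
        have hbstar : bStar θ x z = 1 := by unfold bStar; rw [if_pos hxz]
        show F θ m ε x z * stdPdf z = _
        unfold F
        rw [if_neg, indicator_of_notMem (fun hmem' => absurd (mem_Iic.1 hmem')
          (not_le.2 hzt)), zero_mul]
        rintro ⟨hne, -⟩
        exact hne (by rw [hbz, hbstar])
    rw [setIntegral_congr_fun measurableSet_Ioi hcong,
      setIntegral_indicator measurableSet_Iic, Ioi_inter_Iic]
    exact (interval_bound hD hD0).trans
      (mul_le_mul_of_nonneg_right phi0_le_KK (sq_nonneg _))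
  · push_neg at hb
    have htA : truncMeanAbove c ≤ t := by rw [← hA, htdef]; linarith
    have hct : c < t := lt_of_lt_of_le (lt_tma c) htA
    have hcong : EqOn (fun z => F θ m ε x z * stdPdf z)
        ((Ioi t).indicator (fun y => (y - t) * stdPdf y)) (Ioi c) := by
      intro z hz
      have hmem : ε < x * m + z := by
        have h5 := mem_Ioi.1 hz
        rw [hc] at h5
        linarith
      have haz : aTer m ε x z = 1 := by unfold aTer; rw [if_pos hmem]
      have hZ : ZTer m ε x z = A := by
        unfold ZTer; rw [if_pos hmem, ← hc]
      have hbz : bTer θ m ε x z = -1 := by unfold bTer; rw [hZ, if_neg (not_lt.2 hb)]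
      by_cases hzt : t < z
      · have hxz : 0 < x * θ + z := by rw [htdef] at hzt; linarith
        have hbstar : bStar θ x z = 1 := by unfold bStar; rw [if_pos hxz]
        show F θ m ε x z * stdPdf z = _
        unfold F
        rw [if_pos ⟨by rw [hbz, hbstar]; norm_num, by rw [haz]; norm_num⟩,
          indicator_of_mem (mem_Ioi.2 hzt)]
        have habs : |x * θ + z| = z - t := by rw [abs_of_pos hxz, htdef]; ring
        rw [habs]
      · push_neg at hzt
        have hxz : x * θ + z ≤ 0 := by rw [htdef] at hzt; linarith
        have hbstar : bStar θ x z = -1 := by unfold bStar; rw [if_neg (not_lt.2 hxz)]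
        show F θ m ε x z * stdPdf z = _
        unfold F
        rw [if_neg, indicator_of_notMem (fun hmem' => absurd (mem_Ioi.1 hmem')
          (not_lt.2 hzt)), zero_mul]
        rintro ⟨hne, -⟩
        exact hne (by rw [hbz, hbstar])
    rw [setIntegral_congr_fun measurableSet_Ioi hcong,
      setIntegral_indicator measurableSet_Ioi, Ioi_inter_Ioi, max_eq_right hct.le]
    exact (hard_bound htA hD).trans
      (mul_le_mul_of_nonneg_right hard_const_le_KK (sq_nonneg _))

lemma region_below (θ m ε w x : ℝ) (hε : 0 < ε) (hθm : |θ - m| ≤ w / 2) :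
    ∫ z in Iio (-(x * m) - ε), F θ m ε x z * stdPdf z ≤ KK * (|x| * w / 2) ^ 2 := by
  rw [integral_Iio_reflect, show -(-(x * m) - ε) = x * m + ε from by ring]
  simp only [stdPdf_neg]
  set c := x * m + ε with hc
  set B := truncMeanAbove c with hB
  set τ := x * θ with hτ
  have hD : τ - c ≤ |x| * w / 2 := by
    have h1 : x * (θ - m) ≤ |x * (θ - m)| := le_abs_self _
    have h2 : |x * (θ - m)| = |x| * |θ - m| := abs_mul _ _
    have h3 : |x| * |θ - m| ≤ |x| * (w / 2) := mul_le_mul_of_nonneg_left hθm (abs_nonneg x)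
    have h4 : τ - c = x * (θ - m) - ε := by rw [hτ, hc]; ring
    linarith
  have hD0 : (0:ℝ) ≤ |x| * w / 2 := by
    rcases le_or_gt 0 w with h | h
    · positivity
    · have : |θ - m| < 0 := by
        calc |θ - m| ≤ w / 2 := hθm
          _ < 0 := by linarith
      linarith [abs_nonneg (θ - m)]
  have hfacts : ∀ z ∈ Ioi c, aTer m ε x (-z) = -1 ∧ ZTer m ε x (-z) = -B := by
    intro z hz
    have hzc : c < z := mem_Ioi.1 hz
    have hlt : x * m + -z < -ε := by rw [hc] at hzc; linarith
    have h1 : ¬ ε < x * m + -z := by linarith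
    have h2 : ¬ |x * m + -z| < ε := by
      intro hcontra
      rcases abs_lt.1 hcontra with ⟨ha, -⟩
      linarith
    refine ⟨by unfold aTer; rw [if_neg h1, if_neg h2], ?_⟩
    unfold ZTer
    rw [if_neg h1, if_neg h2, tmb_eq, show -(-(x * m) - ε) = x * m + ε from by ring, ← hc]
  by_cases hb : 0 < x * θ + -B
  · have hBτ : truncMeanAbove c ≤ τ := by rw [← hB, hτ]; linarith
    have hcτ : c < τ := lt_of_lt_of_le (lt_tma c) hBτ
    have hcong : EqOn (fun z => F θ m ε x (-z) * stdPdf z)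
        ((Ici τ).indicator (fun y => (y - τ) * stdPdf y)) (Ioi c) := by
      intro z hz
      obtain ⟨haz, hZz⟩ := hfacts z hz
      have hbz : bTer θ m ε x (-z) = 1 := by unfold bTer; rw [hZz, if_pos hb]
      by_cases hzτ : τ ≤ z
      · have hxz : x * θ + -z ≤ 0 := by rw [hτ] at hzτ; linarith
        have hbstar : bStar θ x (-z) = -1 := by unfold bStar; rw [if_neg (not_lt.2 hxz)]
        show F θ m ε x (-z) * stdPdf z = _
        unfold F
        rw [if_pos ⟨by rw [hbz, hbstar]; norm_num, by rw [haz]; norm_num⟩,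
          indicator_of_mem (mem_Ici.2 hzτ)]
        have habs : |x * θ + -z| = z - τ := by rw [abs_of_nonpos hxz, hτ]; ring
        rw [habs]
      · push_neg at hzτ
        have hxz : 0 < x * θ + -z := by rw [hτ] at hzτ; linarith
        have hbstar : bStar θ x (-z) = 1 := by unfold bStar; rw [if_pos hxz]
        show F θ m ε x (-z) * stdPdf z = _
        unfold F
        rw [if_neg, indicator_of_notMem (fun hmem' => absurd (mem_Ici.1 hmem')
          (not_le.2 hzτ)), zero_mul]
        rintro ⟨hne, -⟩
        exact hne (by rw [hbz, hbstar])
    have hinter : Ioi c ∩ Ici τ = Ici τ :=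
      inter_eq_right.mpr fun z hz => lt_of_lt_of_le hcτ (mem_Ici.1 hz)
    rw [setIntegral_congr_fun measurableSet_Ioi hcong,
      setIntegral_indicator measurableSet_Ici, hinter,
      integral_Ici_eq_integral_Ioi]
    exact (hard_bound hBτ hD).trans
      (mul_le_mul_of_nonneg_right hard_const_le_KK (sq_nonneg _))
  · push_neg at hb
    have hcong : EqOn (fun z => F θ m ε x (-z) * stdPdf z)
        ((Iio τ).indicator (fun y => (τ - y) * stdPdf y)) (Ioi c) := by
      intro z hz
      obtain ⟨haz, hZz⟩ := hfacts z hz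
      have hbz : bTer θ m ε x (-z) = -1 := by unfold bTer; rw [hZz, if_neg (not_lt.2 hb)]
      by_cases hzτ : z < τ
      · have hxz : 0 < x * θ + -z := by rw [hτ] at hzτ; linarith
        have hbstar : bStar θ x (-z) = 1 := by unfold bStar; rw [if_pos hxz]
        show F θ m ε x (-z) * stdPdf z = _
        unfold F
        rw [if_pos ⟨by rw [hbz, hbstar]; norm_num, by rw [haz]; norm_num⟩,
          indicator_of_mem (mem_Iio.2 hzτ)]
        have habs : |x * θ + -z| = τ - z := by rw [abs_of_pos hxz, hτ]; ring
        rw [habs]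
      · push_neg at hzτ
        have hxz : x * θ + -z ≤ 0 := by rw [hτ] at hzτ; linarith
        have hbstar : bStar θ x (-z) = -1 := by unfold bStar; rw [if_neg (not_lt.2 hxz)]
        show F θ m ε x (-z) * stdPdf z = _
        unfold F
        rw [if_neg, indicator_of_notMem (fun hmem' => absurd (mem_Iio.1 hmem')
          (not_lt.2 hzτ)), zero_mul]
        rintro ⟨hne, -⟩
        exact hne (by rw [hbz, hbstar])
    rw [setIntegral_congr_fun measurableSet_Ioi hcong,
      setIntegral_indicator measurableSet_Iio, Ioi_inter_Iio,
      setIntegral_congr_set Ioo_ae_eq_Ioc]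
    exact (interval_bound hD hD0).trans
      (mul_le_mul_of_nonneg_right phi0_le_KK (sq_nonneg _))


lemma inner_bound (θ m ε w x : ℝ) (hε : 0 < ε) (hθm : |θ - m| ≤ w / 2) :
    ∫ z, F θ m ε x z * stdPdf z ≤ KK / 2 * (w ^ 2 * x ^ 2) := by
  have hint := integrable_F_mul θ m ε x hε
  set cp := -(x * m) + ε with hcp
  set cm := -(x * m) - ε with hcm
  have hsplit1 : ∫ z, F θ m ε x z * stdPdf z
      = (∫ z in Iic cp, F θ m ε x z * stdPdf z)
        + ∫ z in Ioi cp, F θ m ε x z * stdPdf z := by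
    rw [← integral_add_compl measurableSet_Iic hint, compl_Iic]
  have hcmcp : cm ≤ cp := by rw [hcm, hcp]; linarith
  have hsplit2 : ∫ z in Iic cp, F θ m ε x z * stdPdf z
      = (∫ z in Iic cm, F θ m ε x z * stdPdf z)
        + ∫ z in Ioc cm cp, F θ m ε x z * stdPdf z := by
    rw [← setIntegral_union (Iic_disjoint_Ioc le_rfl) measurableSet_Ioc
      hint.integrableOn hint.integrableOn, Iic_union_Ioc_eq_Iic hcmcp]
  have hmid : ∫ z in Ioc cm cp, F θ m ε x z * stdPdf z = 0 := by
    rw [← setIntegral_congr_set (Ioo_ae_eq_Ioc (a := cm) (b := cp))]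
    rw [setIntegral_congr_fun (g := fun _ => (0:ℝ)) measurableSet_Ioo ?_]
    · simp
    · intro z hz
      obtain ⟨h1, h2⟩ := hz
      rw [hcm] at h1
      rw [hcp] at h2
      have ha1 : ¬ ε < x * m + z := by linarith
      have ha2 : |x * m + z| < ε := abs_lt.2 ⟨by linarith, by linarith⟩
      have haz : aTer m ε x z = 0 := by unfold aTer; rw [if_neg ha1, if_pos ha2]
      show F θ m ε x z * stdPdf z = 0
      unfold F
      rw [if_neg, zero_mul]
      rintro ⟨-, hne0⟩
      exact hne0 haz
  have hIic_eq : ∫ z in Iic cm, F θ m ε x z * stdPdf z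
      = ∫ z in Iio cm, F θ m ε x z * stdPdf z :=
    (setIntegral_congr_set (Iio_ae_eq_Iic (a := cm))).symm
  have hup := region_above θ m ε w x hε hθm
  have hlo := region_below θ m ε w x hε hθm
  rw [← hcp] at hup
  rw [← hcm] at hlo
  have hsq : (|x| * w / 2) ^ 2 = w ^ 2 * x ^ 2 / 4 := by
    rw [div_pow, mul_pow, sq_abs]
    ring
  rw [hsplit1, hsplit2, hmid, hIic_eq]
  rw [hsq] at hup hlo
  have hKK := KK_pos
  linarith

lemma integral_sq_stdPdf : ∫ z, z ^ 2 * stdPdf z = 1 := by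
  have h1 : ∫ z in Ioi (0:ℝ), z ^ 2 * stdPdf z = S 0 := by
    rw [integral_Ioi_sq_mul]
    ring
  have h2 : ∫ z in Iic (0:ℝ), z ^ 2 * stdPdf z = S 0 := by
    rw [← setIntegral_congr_set (Iio_ae_eq_Iic (a := (0:ℝ))), integral_Iio_reflect]
    simp only [neg_zero, neg_sq, stdPdf_neg]
    exact h1
  have h3 : ∫ z, z ^ 2 * stdPdf z
      = (∫ z in Iic (0:ℝ), z ^ 2 * stdPdf z) + ∫ z in Ioi (0:ℝ), z ^ 2 * stdPdf z := by
    rw [← integral_add_compl measurableSet_Iic integrable_sq_mul_stdPdf, compl_Iic]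
  have h4 := integral_add_compl (measurableSet_Iic (a := (0:ℝ))) integrable_stdPdf
  rw [compl_Iic, integral_stdPdf] at h4
  have h5 : ∫ z in Iic (0:ℝ), stdPdf z = S 0 := by
    rw [← setIntegral_congr_set (Iio_ae_eq_Iic (a := (0:ℝ))), integral_Iio_stdPdf, neg_zero]
  have h6 : (∫ z in Ioi (0:ℝ), stdPdf z) = S 0 := rfl
  rw [h3, h1, h2]
  rw [h5, h6] at h4
  linarith


/-! ### Transfer to the Gaussian measure -/

lemma stdNormal_eq : stdNormal = volume.withDensity (gaussianPDF 0 1) := by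
  rw [stdNormal]
  exact gaussianReal_of_var_ne_zero 0 one_ne_zero

lemma lintegral_stdNormal (g : ℝ → ℝ≥0∞) (hg : Measurable g) :
    ∫⁻ z, g z ∂stdNormal = ∫⁻ z, ENNReal.ofReal (stdPdf z) * g z := by
  rw [stdNormal_eq, lintegral_withDensity_eq_lintegral_mul _ (measurable_gaussianPDF 0 1) hg]
  congr 1
  funext z
  simp only [Pi.mul_apply, gaussianPDF_def, stdPdf_eq_gaussianPDFReal]

lemma lintegral_ofReal_stdNormal (f : ℝ → ℝ) (hf : Measurable f) (hnn : ∀ z, 0 ≤ f z)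
    (hint : Integrable (fun z => f z * stdPdf z)) :
    ∫⁻ z, ENNReal.ofReal (f z) ∂stdNormal = ENNReal.ofReal (∫ z, f z * stdPdf z) := by
  rw [lintegral_stdNormal _ hf.ennreal_ofReal,
    ofReal_integral_eq_lintegral_ofReal hint
      (ae_of_all _ fun z => mul_nonneg (hnn z) (stdPdf_nonneg z))]
  congr 1
  funext z
  rw [← ENNReal.ofReal_mul (stdPdf_nonneg z), mul_comm]

end TernaryAux

open TernaryAux


/-- **Expected regret from choosing the inferior arm under the ternary policy.**
For every `Cε > 0` there is a constant `C > 0` depending only on `Cε` such that,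
with `ε = Cε * w`, the expected regret restricted to the event that the user
chooses the inferior arm while a particular arm is recommended (`b ≠ b*` and
`a ≠ 0`) is at most `C * w²`. -/
theorem ternary_inferior_arm_regret_upper_bound :
    ∀ Cε : ℝ, 0 < Cε →
      ∃ C : ℝ, 0 < C ∧
        ∀ θ l u : ℝ, -1 ≤ l → l ≤ θ → θ ≤ u → u ≤ 1 → l < u →
          ∫ p : ℝ × ℝ,
            (if bTer θ ((l + u) / 2) (Cε * (u - l)) p.1 p.2 ≠ bStar θ p.1 p.2 ∧
                aTer ((l + u) / 2) (Cε * (u - l)) p.1 p.2 ≠ 0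
             then |p.1 * θ + p.2| else 0) ∂stdNormal2 ≤
          C * (u - l) ^ 2 := by
  intro Cε hCε
  refine ⟨KK / 2, by linarith [KK_pos], ?_⟩
  intro θ l u hl hlθ hθu hu hlu
  set m : ℝ := (l + u) / 2 with hm
  set w : ℝ := u - l with hwdef
  set ε : ℝ := Cε * w with hεdef
  have hw : 0 < w := by rw [hwdef]; linarith
  have hε : 0 < ε := mul_pos hCε hw
  have hθm : |θ - m| ≤ w / 2 := by
    rw [abs_le]
    constructor
    · rw [hm, hwdef]; linarith
    · rw [hm, hwdef]; linarith
  show ∫ p : ℝ × ℝ, F θ m ε p.1 p.2 ∂stdNormal2 ≤ KK / 2 * w ^ 2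
  have hFmeas : Measurable (fun p : ℝ × ℝ => F θ m ε p.1 p.2) := measurable_F θ m ε hε
  have h1 : ∫ p : ℝ × ℝ, F θ m ε p.1 p.2 ∂stdNormal2
      = (∫⁻ p : ℝ × ℝ, ENNReal.ofReal (F θ m ε p.1 p.2) ∂stdNormal2).toReal :=
    integral_eq_lintegral_of_nonneg_ae (ae_of_all _ fun p => F_nonneg θ m ε p.1 p.2)
      hFmeas.aestronglyMeasurable
  have h2 : ∫⁻ p : ℝ × ℝ, ENNReal.ofReal (F θ m ε p.1 p.2) ∂stdNormal2
      = ∫⁻ x, ∫⁻ z, ENNReal.ofReal (F θ m ε x z) ∂stdNormal ∂stdNormal := by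
    rw [stdNormal2]
    exact lintegral_prod _ hFmeas.ennreal_ofReal.aemeasurable
  have h3 : ∀ x : ℝ, ∫⁻ z, ENNReal.ofReal (F θ m ε x z) ∂stdNormal
      ≤ ENNReal.ofReal (KK / 2 * w ^ 2 * x ^ 2) := by
    intro x
    rw [lintegral_ofReal_stdNormal _ (measurable_F_snd θ m ε x hε)
      (fun z => F_nonneg θ m ε x z) (integrable_F_mul θ m ε x hε)]
    exact ENNReal.ofReal_le_ofReal
      ((inner_bound θ m ε w x hε hθm).trans_eq (by ring))
  have h4 : ∫⁻ x : ℝ, ENNReal.ofReal (KK / 2 * w ^ 2 * x ^ 2) ∂stdNormal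
      = ENNReal.ofReal (KK / 2 * w ^ 2) := by
    have hmeas : Measurable (fun x : ℝ => KK / 2 * w ^ 2 * x ^ 2) :=
      (measurable_id.pow_const 2).const_mul _
    have hnn : ∀ x : ℝ, 0 ≤ KK / 2 * w ^ 2 * x ^ 2 := fun x =>
      mul_nonneg (mul_nonneg (div_nonneg KK_pos.le (by norm_num)) (sq_nonneg w)) (sq_nonneg x)
    have hint2 : Integrable (fun x : ℝ => KK / 2 * w ^ 2 * x ^ 2 * stdPdf x) := by
      refine (integrable_sq_mul_stdPdf.const_mul (KK / 2 * w ^ 2)).congr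
        (Eventually.of_forall fun x => ?_)
      ring
    rw [lintegral_ofReal_stdNormal _ hmeas hnn hint2]
    congr 1
    rw [show (fun x : ℝ => KK / 2 * w ^ 2 * x ^ 2 * stdPdf x)
        = fun x : ℝ => KK / 2 * w ^ 2 * (x ^ 2 * stdPdf x) from funext fun x => by ring,
      integral_const_mul, integral_sq_stdPdf, mul_one]
  have h5 : ∫⁻ p : ℝ × ℝ, ENNReal.ofReal (F θ m ε p.1 p.2) ∂stdNormal2
      ≤ ENNReal.ofReal (KK / 2 * w ^ 2) := by
    rw [h2, ← h4]
    exact lintegral_mono h3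
  rw [h1]
  calc (∫⁻ p : ℝ × ℝ, ENNReal.ofReal (F θ m ε p.1 p.2) ∂stdNormal2).toReal
      ≤ (ENNReal.ofReal (KK / 2 * w ^ 2)).toReal :=
        ENNReal.toReal_mono ENNReal.ofReal_ne_top h5
    _ = KK / 2 * w ^ 2 := ENNReal.toReal_ofReal
        (mul_nonneg (div_nonneg KK_pos.le (by norm_num)) (sq_nonneg w))

end
end
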